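/- arXiv:1806.07704 — 6 statements merged into one kernel-verified Lean document; each statement's English description precedes it below -/
import Mathlib

section
/- Let A be a real 2×2 matrix with eigenvalues λ₊ > 0 and -λ₋ < 0, eigenprojectors π₊, π₋, and let ν ∈ ℝ² with |ν| = 1. Suppose π₋ ν⊥ ≠ 0. Then for M > 2 + 8 (λ₊/λ₋) |π₊ν⊥|²/|π₋ν⊥|², the symmetrizer S = π₊ᵀπ₊ + M π₋ᵀπ₋ satisfies: there exist α₁ > 0 and β₁ > 0 such that for all v ∈ ℝ², vᵀ S A v ≤ -α₁ |v|² + β₁ |ν · v|². -/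
open Matrix

/-- Rotation of a plane vector by `π/2`. -/
def perp (v : Fin 2 → ℝ) : Fin 2 → ℝ := ![-v 1, v 0]

private lemma dot_expand (x y : Fin 2 → ℝ) : x ⬝ᵥ y = x 0 * y 0 + x 1 * y 1 := by
  simp [dotProduct, Fin.sum_univ_two]

private lemma dot_nonneg' (x : Fin 2 → ℝ) : 0 ≤ x ⬝ᵥ x := by
  rw [dot_expand]; nlinarith [sq_nonneg (x 0), sq_nonneg (x 1)]

private lemma dot_pos' (x : Fin 2 → ℝ) (hx : x ≠ 0) : 0 < x ⬝ᵥ x := by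
  have h : x 0 ≠ 0 ∨ x 1 ≠ 0 := by
    by_contra h; push_neg at h
    exact hx (funext fun i => by fin_cases i <;> simp [h.1, h.2])
  rw [dot_expand]
  rcases h with h | h
  · nlinarith [mul_self_pos.2 h, mul_self_nonneg (x 1)]
  · nlinarith [mul_self_pos.2 h, mul_self_nonneg (x 0)]

private lemma quad_form (B : Matrix (Fin 2) (Fin 2) ℝ) (v : Fin 2 → ℝ) :
    v ⬝ᵥ ((Bᵀ * B) *ᵥ v) = (B *ᵥ v) ⬝ᵥ (B *ᵥ v) := by
  simp [dotProduct, Matrix.mulVec, Matrix.mul_apply, Fin.sum_univ_two]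
  ring

private lemma sq_add_le (x y : Fin 2 → ℝ) :
    (x + y) ⬝ᵥ (x + y) ≤ 2 * (x ⬝ᵥ x) + 2 * (y ⬝ᵥ y) := by
  simp only [dot_expand, Pi.add_apply]
  nlinarith [sq_nonneg (x 0 - y 0), sq_nonneg (x 1 - y 1)]

private lemma sq_add_ge (x y : Fin 2 → ℝ) :
    (x ⬝ᵥ x) / 2 - (y ⬝ᵥ y) ≤ (x + y) ⬝ᵥ (x + y) := by
  simp only [dot_expand, Pi.add_apply]
  nlinarith [sq_nonneg (x 0 + 2 * y 0), sq_nonneg (x 1 + 2 * y 1)]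

private lemma smul_dot (a : ℝ) (x : Fin 2 → ℝ) : (a • x) ⬝ᵥ (a • x) = a ^ 2 * (x ⬝ᵥ x) := by
  simp [dot_expand]; ring

/-- Let `A` be a real 2×2 matrix with eigenvalues `λ₊ > 0`, `-λ₋ < 0`, spectral projectors
`π₊, π₋`, and `ν` a unit vector with `π₋ ν⊥ ≠ 0`. Then for
`M > 2 + 8 (λ₊/λ₋) |π₊ν⊥|²/|π₋ν⊥|²`, the Kreiss symmetrizer `S = π₊ᵀπ₊ + M π₋ᵀπ₋` satisfies:
there exist `α₁, β₁ > 0` such that for all `v`, `vᵀ S A v ≤ -α₁|v|² + β₁|ν·v|²`. -/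
theorem stmt3 (A πp πm : Matrix (Fin 2) (Fin 2) ℝ) (lp lm M : ℝ) (ν : Fin 2 → ℝ)
    (hlp : 0 < lp) (hlm : 0 < lm)
    (hsum : πp + πm = 1) (hpp : πp * πp = πp) (hmm : πm * πm = πm)
    (hpm : πp * πm = 0) (hmp : πm * πp = 0)
    (hA : A = lp • πp - lm • πm)
    (hν : ν ⬝ᵥ ν = 1)
    (hker : πm *ᵥ perp ν ≠ 0)
    (hM : 2 + 8 * (lp / lm) * ((πp *ᵥ perp ν) ⬝ᵥ (πp *ᵥ perp ν)) /
        ((πm *ᵥ perp ν) ⬝ᵥ (πm *ᵥ perp ν)) < M) :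
    ∃ α₁ > 0, ∃ β₁ > 0, ∀ v : Fin 2 → ℝ,
      v ⬝ᵥ (((πpᵀ * πp + M • (πmᵀ * πm)) * A) *ᵥ v) ≤
        -α₁ * (v ⬝ᵥ v) + β₁ * (ν ⬝ᵥ v) ^ 2 := by
  set w : Fin 2 → ℝ := perp ν with hw
  set P1 : ℝ := (πp *ᵥ ν) ⬝ᵥ (πp *ᵥ ν) with hP1
  set P2 : ℝ := (πp *ᵥ w) ⬝ᵥ (πp *ᵥ w) with hP2
  set m1 : ℝ := (πm *ᵥ ν) ⬝ᵥ (πm *ᵥ ν) with hm1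
  set m2 : ℝ := (πm *ᵥ w) ⬝ᵥ (πm *ᵥ w) with hm2
  have hP1n : 0 ≤ P1 := dot_nonneg' _
  have hP2n : 0 ≤ P2 := dot_nonneg' _
  have hm1n : 0 ≤ m1 := dot_nonneg' _
  have hm2p : 0 < m2 := dot_pos' _ hker
  -- key scalar inequality
  have hkey : 2 * (lm * m2) + 8 * lp * P2 < M * (lm * m2) := by
    have hprod : (0:ℝ) < lm * m2 := mul_pos hlm hm2p
    have h8 : (2 + 8 * (lp / lm) * P2 / m2) * (lm * m2) = 2 * (lm * m2) + 8 * lp * P2 := by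
      field_simp
    have := mul_lt_mul_of_pos_right hM hprod
    rw [h8] at this
    exact this
  have hMpos : 0 < M := by nlinarith [mul_pos hlm hm2p, mul_nonneg hlp.le hP2n]
  -- the symmetrized matrix
  have h1 : πpᵀ * πp * πp = πpᵀ * πp := by rw [Matrix.mul_assoc, hpp]
  have h2 : πpᵀ * πp * πm = 0 := by rw [Matrix.mul_assoc, hpm, Matrix.mul_zero]
  have h3 : πmᵀ * πm * πm = πmᵀ * πm := by rw [Matrix.mul_assoc, hmm]
  have h4 : πmᵀ * πm * πp = 0 := by rw [Matrix.mul_assoc, hmp, Matrix.mul_zero]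
  have hSA : (πpᵀ * πp + M • (πmᵀ * πm)) * A
      = lp • (πpᵀ * πp) - (M * lm) • (πmᵀ * πm) := by
    rw [hA]
    simp only [mul_sub, add_mul, Matrix.mul_smul, Matrix.smul_mul, h1, h2, h3, h4,
      smul_zero, sub_zero, zero_sub, smul_smul]
    module
  refine ⟨M * lm * m2 / 2 - 2 * lp * P2, by nlinarith [mul_pos hlm hm2p, mul_nonneg hlp.le hP2n],
    (M * lm * m2 / 2 - 2 * lp * P2) + 2 * lp * P1 + M * lm * m1, by
      nlinarith [mul_pos hlm hm2p, mul_nonneg hlp.le hP2n, mul_nonneg hlp.le hP1n,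
        mul_nonneg (mul_nonneg hMpos.le hlm.le) hm1n], ?_⟩
  intro v
  have hν' : ν 0 * ν 0 + ν 1 * ν 1 = 1 := by rw [dot_expand] at hν; linarith
  set a : ℝ := ν ⬝ᵥ v with ha
  set b : ℝ := w ⬝ᵥ v with hb
  have hv : v = a • ν + b • w := by
    funext i
    fin_cases i
    · show v 0 = (a • ν + b • w) 0
      simp only [ha, hb, hw, perp, dot_expand, Pi.add_apply, Pi.smul_apply, smul_eq_mul,
        Matrix.cons_val_zero, Matrix.cons_val_one, Matrix.head_cons]
      linear_combination (-(v 0)) * hν'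
    · show v 1 = (a • ν + b • w) 1
      simp only [ha, hb, hw, perp, dot_expand, Pi.add_apply, Pi.smul_apply, smul_eq_mul,
        Matrix.cons_val_zero, Matrix.cons_val_one, Matrix.head_cons]
      linear_combination (-(v 1)) * hν'
  have hvv : v ⬝ᵥ v = a ^ 2 + b ^ 2 := by
    rw [ha, hb, hw]
    simp only [dot_expand, perp, Matrix.cons_val_zero, Matrix.cons_val_one, Matrix.head_cons]
    linear_combination (-(v 0 * v 0 + v 1 * v 1)) * hν'
  have hpv : πp *ᵥ v = a • (πp *ᵥ ν) + b • (πp *ᵥ w) := by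
    rw [hv]
    simp [Matrix.mulVec_add, Matrix.mulVec_smul]
  have hmv : πm *ᵥ v = b • (πm *ᵥ w) + a • (πm *ᵥ ν) := by
    rw [hv]
    rw [Matrix.mulVec_add, Matrix.mulVec_smul, Matrix.mulVec_smul, add_comm]
  have hpbound : (πp *ᵥ v) ⬝ᵥ (πp *ᵥ v) ≤ 2 * (a ^ 2 * P1) + 2 * (b ^ 2 * P2) := by
    rw [hpv]
    calc (a • (πp *ᵥ ν) + b • (πp *ᵥ w)) ⬝ᵥ (a • (πp *ᵥ ν) + b • (πp *ᵥ w))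
        ≤ 2 * ((a • (πp *ᵥ ν)) ⬝ᵥ (a • (πp *ᵥ ν))) + 2 * ((b • (πp *ᵥ w)) ⬝ᵥ (b • (πp *ᵥ w))) :=
          sq_add_le _ _
      _ = 2 * (a ^ 2 * P1) + 2 * (b ^ 2 * P2) := by rw [smul_dot, smul_dot]
  have hmbound : b ^ 2 * m2 / 2 - a ^ 2 * m1 ≤ (πm *ᵥ v) ⬝ᵥ (πm *ᵥ v) := by
    rw [hmv]
    calc b ^ 2 * m2 / 2 - a ^ 2 * m1
        = ((b • (πm *ᵥ w)) ⬝ᵥ (b • (πm *ᵥ w))) / 2 - ((a • (πm *ᵥ ν)) ⬝ᵥ (a • (πm *ᵥ ν))) := by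
          rw [smul_dot, smul_dot]
      _ ≤ _ := sq_add_ge _ _
  have hLHS : v ⬝ᵥ (((πpᵀ * πp + M • (πmᵀ * πm)) * A) *ᵥ v)
      = lp * ((πp *ᵥ v) ⬝ᵥ (πp *ᵥ v)) - (M * lm) * ((πm *ᵥ v) ⬝ᵥ (πm *ᵥ v)) := by
    rw [hSA, Matrix.sub_mulVec, Matrix.smul_mulVec, Matrix.smul_mulVec,
      dotProduct_sub, dotProduct_smul, dotProduct_smul, quad_form, quad_form]
    simp [smul_eq_mul]
  rw [hLHS, hvv]
  nlinarith [mul_le_mul_of_nonneg_left hpbound hlp.le,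
    mul_le_mul_of_nonneg_left hmbound (mul_nonneg hMpos.le hlm.le),
    mul_pos hlm hm2p, mul_nonneg hlp.le hP2n, mul_nonneg hlp.le hP1n,
    mul_nonneg (mul_nonneg hMpos.le hlm.le) hm1n, sq_nonneg a, sq_nonneg b]
end

section
/- There exists an absolute constant C such that for every γ > 0, T > 0 and every u ∈ C¹([0,T]; ℝⁿ), and every t ∈ [0,T]: e^{-γt}|u(t)| + (γ ∫₀ᵗ e^{-2γt'}|u(t')|² dt')^{1/2} ≤ C ( |u(0)| + S*_{γ,t}(|∂ₜu|) ), where S*_{γ,t}(f) = sup over φ ∈ L^∞ ∩ L² of |∫₀ᵗ e^{-2γt'} f(t') φ(t') dt'| subject to sup_{t'∈[0,t]} e^{-γt'}|φ(t')| + (γ ∫₀ᵗ e^{-2γt'}|φ(t')|² dt')^{1/2} ≤ 1. -/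
/-!
Differentiating `e^{-2γs}|u(s)|²` gives the energy inequality
`e^{-2γs}|u(s)|² + 2γ ∫₀ˢ e^{-2γr}|u|² ≤ |u(0)|² + 2K` with `K = ∫₀ᵗ e^{-2γr}|∂ₜu||u|`, so both
`A = max_{[0,t]} e^{-γs}|u(s)|` and `B = (γ ∫₀ᵗ e^{-2γr}|u|²)^{1/2}` are controlled by
`|u(0)|² + 2K`. Testing `S*` against `φ = |u|`, whose norm is at most `A + B`, gives
`K ≤ (A + B) S*`, and the resulting quadratic inequality yields `A + B ≤ 2|u(0)| + 6 S*`.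
-/

open MeasureTheory

/-- The dual norm `S*_{γ,t}(f)`: the supremum of the weighted pairings
`|∫₀ᵗ e^{-2γs} f(s) φ(s) ds|` over measurable `φ` with
`sup_{[0,t]} e^{-γs}|φ(s)| + (γ ∫₀ᵗ e^{-2γs} φ(s)² ds)^{1/2} ≤ 1`. -/
noncomputable def Sstar (γ t : ℝ) (f : ℝ → ℝ) : ℝ :=
  sSup { y : ℝ | ∃ φ : ℝ → ℝ, Measurable φ ∧
    (∃ a : ℝ, (∀ s ∈ Set.Icc (0:ℝ) t, Real.exp (-(γ * s)) * |φ s| ≤ a) ∧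
      a + Real.sqrt (γ * ∫ s in (0:ℝ)..t, Real.exp (-(2 * γ * s)) * φ s ^ 2) ≤ 1) ∧
    y = |∫ s in (0:ℝ)..t, Real.exp (-(2 * γ * s)) * f s * φ s| }

open Set intervalIntegral
open scoped RealInnerProductSpace

section Sstar

variable {γ t : ℝ} {f : ℝ → ℝ}

theorem Sstar_nonneg : 0 ≤ Sstar γ t f :=
  Real.sSup_nonneg (by rintro _ ⟨φ, -, -, rfl⟩; exact abs_nonneg _)

theorem abs_integral_le_Sstar (hγ : 0 ≤ γ) (ht : 0 ≤ t) {M : ℝ}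
    (hf : ∀ s ∈ Icc 0 t, |f s| ≤ M) {φ : ℝ → ℝ} (hφ : Measurable φ) {a : ℝ}
    (ha : ∀ s ∈ Icc 0 t, Real.exp (-(γ * s)) * |φ s| ≤ a)
    (hφa : a + Real.sqrt (γ * ∫ s in (0:ℝ)..t, Real.exp (-(2 * γ * s)) * φ s ^ 2) ≤ 1) :
    |∫ s in (0:ℝ)..t, Real.exp (-(2 * γ * s)) * f s * φ s| ≤ Sstar γ t f := by
  refine le_csSup ⟨M * t, ?_⟩ ⟨φ, hφ, ⟨a, ha, hφa⟩, rfl⟩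
  rintro _ ⟨ψ, -, ⟨b, hb, hψb⟩, rfl⟩
  have hb1 : b ≤ 1 := (le_add_of_nonneg_right (Real.sqrt_nonneg _)).trans hψb
  have hbound : ∀ s ∈ uIoc 0 t, ‖Real.exp (-(2 * γ * s)) * f s * ψ s‖ ≤ M := by
    intro s hs
    rw [uIoc_of_le ht] at hs
    have hs' : s ∈ Icc 0 t := Ioc_subset_Icc_self hs
    have hexp : Real.exp (-(γ * s)) ≤ 1 := Real.exp_le_one_iff.2 (by nlinarith [hs.1])
    calc ‖Real.exp (-(2 * γ * s)) * f s * ψ s‖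
        = Real.exp (-(γ * s)) * |f s| * (Real.exp (-(γ * s)) * |ψ s|) := by
          rw [Real.norm_eq_abs, abs_mul, abs_mul, abs_of_pos (Real.exp_pos _),
            show -(2 * γ * s) = -(γ * s) + -(γ * s) by ring, Real.exp_add]
          ring
      _ ≤ 1 * M * 1 := by
          gcongr
          exacts [by linarith [abs_nonneg (f s), hf s hs'], hf s hs', (hb s hs').trans hb1]
      _ = M := by ring
  simpa [Real.norm_eq_abs, abs_of_nonneg ht] using norm_integral_le_of_norm_le_const hbound

theorem abs_integral_le_mul_Sstar (hγ : 0 ≤ γ) (ht : 0 ≤ t) {M : ℝ}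
    (hf : ∀ s ∈ Icc 0 t, |f s| ≤ M) {φ : ℝ → ℝ} (hφ : Measurable φ) {a : ℝ}
    (ha : ∀ s ∈ Icc 0 t, Real.exp (-(γ * s)) * |φ s| ≤ a) :
    |∫ s in (0:ℝ)..t, Real.exp (-(2 * γ * s)) * f s * φ s| ≤
      (a + Real.sqrt (γ * ∫ s in (0:ℝ)..t, Real.exp (-(2 * γ * s)) * φ s ^ 2)) * Sstar γ t f := by
  set I := ∫ s in (0:ℝ)..t, Real.exp (-(2 * γ * s)) * φ s ^ 2
  set N := a + Real.sqrt (γ * I)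
  have ha0 : 0 ≤ a := (by positivity : 0 ≤ Real.exp (-(γ * 0)) * |φ 0|).trans (ha 0 ⟨le_rfl, ht⟩)
  rcases (add_nonneg ha0 (Real.sqrt_nonneg (γ * I))).eq_or_lt with hN | hN
  · have hφ0 : ∀ s ∈ uIcc 0 t, Real.exp (-(2 * γ * s)) * f s * φ s = 0 := by
      intro s hs
      rw [uIcc_of_le ht] at hs
      have : Real.exp (-(γ * s)) * |φ s| ≤ 0 :=
        (ha s hs).trans (by linarith [Real.sqrt_nonneg (γ * I)])
      rw [abs_nonpos_iff.1 (nonpos_of_mul_nonpos_right this (Real.exp_pos _)), mul_zero]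
    rw [integral_congr hφ0, intervalIntegral.integral_zero, abs_zero]
    exact mul_nonneg (add_nonneg ha0 (Real.sqrt_nonneg _)) Sstar_nonneg
  · have hnorm : a / N + Real.sqrt (γ * ∫ s in (0:ℝ)..t, Real.exp (-(2 * γ * s)) * (φ s / N) ^ 2)
        ≤ 1 := by
      simp_rw [div_pow, ← mul_div_assoc, intervalIntegral.integral_div]
      rw [← mul_div_assoc, Real.sqrt_div' _ (sq_nonneg N), Real.sqrt_sq hN.le, ← add_div,
        div_self hN.ne']
    have hscaled := abs_integral_le_Sstar hγ ht hf (hφ.div_const N) (a := a / N)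
      (fun s hs => by
        rw [abs_div, abs_of_pos hN, ← mul_div_assoc]
        exact div_le_div_of_nonneg_right (ha s hs) hN.le) hnorm
    have hpair : ∫ s in (0:ℝ)..t, Real.exp (-(2 * γ * s)) * f s * (φ s / N) =
        (∫ s in (0:ℝ)..t, Real.exp (-(2 * γ * s)) * f s * φ s) / N := by
      simp only [← mul_div_assoc, intervalIntegral.integral_div]
    rwa [hpair, abs_div, abs_of_pos hN, div_le_iff₀ hN, mul_comm (Sstar γ t f)] at hscaled

theorem abs_integral_le_mul_Sstar_of_continuousOn (hγ : 0 ≤ γ) (ht : 0 ≤ t) {M : ℝ}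
    (hf : ∀ s ∈ Icc 0 t, |f s| ≤ M) {g : ℝ → ℝ} (hg : ContinuousOn g (Icc 0 t)) {a : ℝ}
    (ha : ∀ s ∈ Icc 0 t, Real.exp (-(γ * s)) * |g s| ≤ a) :
    |∫ s in (0:ℝ)..t, Real.exp (-(2 * γ * s)) * f s * g s| ≤
      (a + Real.sqrt (γ * ∫ s in (0:ℝ)..t, Real.exp (-(2 * γ * s)) * g s ^ 2)) * Sstar γ t f := by
  set φ := IccExtend ht ((Icc 0 t).domRestrict g)
  have hφg : EqOn φ g (uIcc 0 t) := fun s hs => by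
    rw [uIcc_of_le ht] at hs
    simp [φ, IccExtend_of_mem ht _ hs]
  have hφ : Measurable φ := (continuousOn_iff_continuous_domRestrict.1 hg).Icc_extend'.measurable
  have := abs_integral_le_mul_Sstar hγ ht hf hφ (a := a) fun s hs => by
    rw [hφg (by rwa [uIcc_of_le ht])]
    exact ha s hs
  have hpair : ∫ s in (0:ℝ)..t, Real.exp (-(2 * γ * s)) * f s * φ s =
      ∫ s in (0:ℝ)..t, Real.exp (-(2 * γ * s)) * f s * g s :=
    integral_congr fun s hs => by simp only [hφg hs]
  have hsq : ∫ s in (0:ℝ)..t, Real.exp (-(2 * γ * s)) * φ s ^ 2 =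
      ∫ s in (0:ℝ)..t, Real.exp (-(2 * γ * s)) * g s ^ 2 :=
    integral_congr fun s hs => by simp only [hφg hs]
  rwa [hpair, hsq] at this

end Sstar

theorem add_le_of_energy_bounds {A B a S K : ℝ} (ha : 0 ≤ a) (hS : 0 ≤ S)
    (hA2 : A ^ 2 ≤ a ^ 2 + 2 * K) (hB2 : 2 * B ^ 2 ≤ a ^ 2 + 2 * K)
    (hK : K ≤ (A + B) * S) : A + B ≤ 2 * a + 6 * S := by
  nlinarith [sq_nonneg (A - B), sq_nonneg (A + B - 2 * a - 6 * S)]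

section Energy

variable {E : Type*} [NormedAddCommGroup E] [InnerProductSpace ℝ E] {γ : ℝ} {u u' : ℝ → E}

theorem HasDerivAt.exp_mul_norm_sq {v : E} {r : ℝ} (hu : HasDerivAt u v r) :
    HasDerivAt (fun x => Real.exp (-(2 * γ * x)) * ‖u x‖ ^ 2)
      (2 * (Real.exp (-(2 * γ * r)) * ⟪u r, v⟫) -
        2 * γ * (Real.exp (-(2 * γ * r)) * ‖u r‖ ^ 2)) r := by
  have hlin : HasDerivAt (fun x => -(2 * γ * x)) (-(2 * γ)) r := by
    simpa using ((hasDerivAt_id' r).const_mul (2 * γ)).fun_neg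
  exact (hlin.exp.fun_mul hu.norm_sq).congr_deriv (by ring)

theorem weighted_energy_eq {s : ℝ} (hs : 0 ≤ s) (hu : ContinuousOn u (Icc 0 s))
    (hu' : ContinuousOn u' (Icc 0 s)) (hd : ∀ r ∈ Ioo 0 s, HasDerivAt u (u' r) r) :
    Real.exp (-(2 * γ * s)) * ‖u s‖ ^ 2 +
        2 * γ * ∫ r in (0:ℝ)..s, Real.exp (-(2 * γ * r)) * ‖u r‖ ^ 2 =
      ‖u 0‖ ^ 2 + 2 * ∫ r in (0:ℝ)..s, Real.exp (-(2 * γ * r)) * ⟪u r, u' r⟫ := by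
  have hexp : ContinuousOn (fun r : ℝ => Real.exp (-(2 * γ * r))) (Icc 0 s) := by fun_prop
  have hint_inner : IntervalIntegrable (fun r => Real.exp (-(2 * γ * r)) * ⟪u r, u' r⟫)
      volume 0 s :=
    ((hexp.mul (hu.inner hu')).mono (uIcc_of_le hs).subset).intervalIntegrable
  have hint_sq : IntervalIntegrable (fun r => Real.exp (-(2 * γ * r)) * ‖u r‖ ^ 2) volume 0 s :=
    ((hexp.mul (hu.norm.pow 2)).mono (uIcc_of_le hs).subset).intervalIntegrable
  have hftc := integral_eq_sub_of_hasDerivAt_of_le hs (hexp.mul (hu.norm.pow 2))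
    (fun r hr => (hd r hr).exp_mul_norm_sq) ((hint_inner.const_mul 2).sub (hint_sq.const_mul _))
  rw [intervalIntegral.integral_sub (hint_inner.const_mul 2) (hint_sq.const_mul _),
    intervalIntegral.integral_const_mul, intervalIntegral.integral_const_mul] at hftc
  simp only [Pi.mul_apply, Pi.pow_apply, mul_zero, neg_zero, Real.exp_zero, one_mul] at hftc
  linarith

theorem weighted_energy_le {s : ℝ} (hs : 0 ≤ s) (hu : ContinuousOn u (Icc 0 s))
    (hu' : ContinuousOn u' (Icc 0 s)) (hd : ∀ r ∈ Ioo 0 s, HasDerivAt u (u' r) r) :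
    Real.exp (-(2 * γ * s)) * ‖u s‖ ^ 2 +
        2 * γ * ∫ r in (0:ℝ)..s, Real.exp (-(2 * γ * r)) * ‖u r‖ ^ 2 ≤
      ‖u 0‖ ^ 2 + 2 * ∫ r in (0:ℝ)..s, Real.exp (-(2 * γ * r)) * ‖u' r‖ * ‖u r‖ := by
  have hexp : ContinuousOn (fun r : ℝ => Real.exp (-(2 * γ * r))) (Icc 0 s) := by fun_prop
  rw [weighted_energy_eq hs hu hu' hd]
  gcongr
  refine integral_mono_on hs ?_ ?_ fun r _ => ?_
  · exact (hexp.mul (hu.inner hu')).intervalIntegrable_of_Icc hs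
  · exact ((hexp.mul hu'.norm).mul hu.norm).intervalIntegrable_of_Icc hs
  · rw [mul_assoc (Real.exp _) ‖u' r‖, mul_comm ‖u' r‖]
    exact mul_le_mul_of_nonneg_left (real_inner_le_norm _ _) (Real.exp_pos _).le

theorem exp_mul_norm_add_sqrt_integral_le {t : ℝ} (hγ : 0 ≤ γ) (ht : 0 ≤ t)
    (hu : ContinuousOn u (Icc 0 t)) (hu' : ContinuousOn u' (Icc 0 t))
    (hd : ∀ r ∈ Ioo 0 t, HasDerivAt u (u' r) r) :
    Real.exp (-(γ * t)) * ‖u t‖ +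
        Real.sqrt (γ * ∫ s in (0:ℝ)..t, Real.exp (-(2 * γ * s)) * ‖u s‖ ^ 2) ≤
      2 * ‖u 0‖ + 6 * Sstar γ t fun s => ‖u' s‖ := by
  obtain ⟨s₀, hs₀, hmax⟩ := isCompact_Icc.exists_isMaxOn (nonempty_Icc.2 ht)
    ((by fun_prop : Continuous fun s : ℝ => Real.exp (-(γ * s))).continuousOn.mul hu.norm)
  obtain ⟨M, hM⟩ := isCompact_Icc.exists_bound_of_continuousOn hu'
  set A := Real.exp (-(γ * s₀)) * ‖u s₀‖
  set I := ∫ s in (0:ℝ)..t, Real.exp (-(2 * γ * s)) * ‖u s‖ ^ 2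
  set K := ∫ s in (0:ℝ)..t, Real.exp (-(2 * γ * s)) * ‖u' s‖ * ‖u s‖
  have hK : K ≤ (A + Real.sqrt (γ * I)) * Sstar γ t fun s => ‖u' s‖ :=
    (le_abs_self K).trans <| abs_integral_le_mul_Sstar_of_continuousOn hγ ht
      (fun s hs => (abs_norm _).trans_le (hM s hs)) hu.norm
      (fun s hs => by rw [abs_norm]; exact hmax hs)
  have henergy : ∀ s ∈ Icc 0 t, Real.exp (-(2 * γ * s)) * ‖u s‖ ^ 2 +
      2 * γ * ∫ r in (0:ℝ)..s, Real.exp (-(2 * γ * r)) * ‖u r‖ ^ 2 ≤ ‖u 0‖ ^ 2 + 2 * K := by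
    intro s hs
    have hsub : Icc 0 s ⊆ Icc 0 t := Icc_subset_Icc_right hs.2
    refine (weighted_energy_le hs.1 (hu.mono hsub) (hu'.mono hsub)
      fun r hr => hd r ⟨hr.1, hr.2.trans_le hs.2⟩).trans ?_
    gcongr
    refine integral_mono_interval le_rfl hs.1 hs.2 (.of_forall fun r => by positivity) ?_
    exact ((by fun_prop : Continuous fun r : ℝ => Real.exp (-(2 * γ * r))).continuousOn.mul
      hu'.norm |>.mul hu.norm).intervalIntegrable_of_Icc ht
  have hA2 : A ^ 2 ≤ ‖u 0‖ ^ 2 + 2 * K := by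
    have hI₀ : 0 ≤ ∫ r in (0:ℝ)..s₀, Real.exp (-(2 * γ * r)) * ‖u r‖ ^ 2 :=
      integral_nonneg hs₀.1 fun r _ => by positivity
    have hA_sq : A ^ 2 = Real.exp (-(2 * γ * s₀)) * ‖u s₀‖ ^ 2 := by
      rw [mul_pow, ← Real.exp_nat_mul]
      ring_nf
    nlinarith [henergy s₀ hs₀]
  have hB2 : 2 * Real.sqrt (γ * I) ^ 2 ≤ ‖u 0‖ ^ 2 + 2 * K := by
    rw [Real.sq_sqrt (mul_nonneg hγ (integral_nonneg ht fun r _ => by positivity))]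
    nlinarith [henergy t ⟨ht, le_rfl⟩, (by positivity : 0 ≤ Real.exp (-(2 * γ * t)) * ‖u t‖ ^ 2)]
  calc Real.exp (-(γ * t)) * ‖u t‖ + Real.sqrt (γ * I) ≤ A + Real.sqrt (γ * I) := by
        gcongr
        exact hmax ⟨ht, le_rfl⟩
    _ ≤ 2 * ‖u 0‖ + 6 * Sstar γ t fun s => ‖u' s‖ :=
        add_le_of_energy_bounds (norm_nonneg _) Sstar_nonneg hA2 hB2 hK

end Energy

/-- There is an absolute constant `C` such that for every `γ, T > 0` and every
`u ∈ C¹([0,T]; ℝⁿ)` with derivative `u'`, and every `t ∈ [0,T]`: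
`e^{-γt}|u(t)| + (γ ∫₀ᵗ e^{-2γs}|u(s)|² ds)^{1/2} ≤ C (|u(0)| + S*_{γ,t}(|∂ₜu|))`. -/
theorem stmt4 :
    ∃ C : ℝ, 0 < C ∧ ∀ (n : ℕ) (γ T : ℝ), 0 < γ → 0 < T →
      ∀ u u' : ℝ → EuclideanSpace ℝ (Fin n),
        (∀ s ∈ Set.Icc (0:ℝ) T, HasDerivWithinAt u (u' s) (Set.Icc (0:ℝ) T) s) →
        ContinuousOn u' (Set.Icc (0:ℝ) T) →
        ∀ t ∈ Set.Icc (0:ℝ) T,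
          Real.exp (-(γ * t)) * ‖u t‖ +
              Real.sqrt (γ * ∫ s in (0:ℝ)..t, Real.exp (-(2 * γ * s)) * ‖u s‖ ^ 2) ≤
            C * (‖u 0‖ + Sstar γ t fun s => ‖u' s‖) := by
  refine ⟨6, by norm_num, fun n γ T hγ _ u u' hu hu' t ht => ?_⟩
  have hsub : Icc 0 t ⊆ Icc 0 T := Icc_subset_Icc_right ht.2
  have hd : ∀ r ∈ Ioo 0 t, HasDerivAt u (u' r) r := fun r hr =>
    (hu r ⟨hr.1.le, (hr.2.trans_le ht.2).le⟩).hasDerivAt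
      (Icc_mem_nhds hr.1 (hr.2.trans_le ht.2))
  have hcont : ContinuousOn u (Icc 0 T) := fun s hs => (hu s hs).continuousWithinAt
  linarith [exp_mul_norm_add_sqrt_integral_le hγ.le ht.1 (hcont.mono hsub) (hu'.mono hsub) hd,
    norm_nonneg (u 0), Sstar_nonneg (γ := γ) (t := t) (f := fun s => ‖u' s‖)]
end

section
/- (Alinhac's good unknown cancellation, 1D.) Let φ(t,x) be a C² diffeomorphism in x with ∂ₓφ > 0, define ∂ₓ^φ = (∂ₓφ)^{-1}∂ₓ and ∂ₜ^φ = ∂ₜ - (∂ₜφ/∂ₓφ)∂ₓ. Suppose u solves ∂ₜu + 𝒜(ū, ∂φ)∂ₓu + Bu = f where 𝒜(ū, ∂φ) = (∂ₓφ)^{-1}(A(ū) - (∂ₜφ) Id). Then the time-differentiated quantity u̇^φ := ∂ₜu - (∂ₜφ)∂ₓ^φ u satisfies ∂ₜu̇^φ + 𝒜(ū, ∂φ)∂ₓu̇^φ + A'(ū)[ū̇^φ]∂ₓ^φu + B u̇^φ = ḟ^φ - Ḃ^φ u, where ū̇^φ = ∂ₜū - (∂ₜφ)∂ₓ^φū,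 ḟ^φ = ∂ₜf - (∂ₜφ)∂ₓ^φf, and Ḃ^φ = ∂ₜB - (∂ₜφ)∂ₓ^φB; in particular no second derivatives of φ appear. -/
/-- Partial derivative with respect to the first (time) variable. -/
noncomputable def pdt {α : Type*} [NormedAddCommGroup α] [NormedSpace ℝ α]
    (F : ℝ → ℝ → α) (t x : ℝ) : α := deriv (fun s => F s x) t

/-- Partial derivative with respect to the second (space) variable. -/
noncomputable def pdx {α : Type*} [NormedAddCommGroup α] [NormedSpace ℝ α]
    (F : ℝ → ℝ → α) (t x : ℝ) : α := deriv (fun y => F t y) x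

/-- The derivative `∂ₓ^φ = (∂ₓφ)⁻¹ ∂ₓ`. -/
noncomputable def pdxphi {α : Type*} [NormedAddCommGroup α] [NormedSpace ℝ α]
    (φ : ℝ → ℝ → ℝ) (F : ℝ → ℝ → α) (t x : ℝ) : α := (pdx φ t x)⁻¹ • pdx F t x

/-- The derivative `∂ₜ^φ = ∂ₜ - (∂ₜφ/∂ₓφ) ∂ₓ`; applied to `u` this is Alinhac's good unknown
`u̇^φ` associated with time differentiation. -/
noncomputable def pdtphi {α : Type*} [NormedAddCommGroup α] [NormedSpace ℝ α]
    (φ : ℝ → ℝ → ℝ) (F : ℝ → ℝ → α) (t x : ℝ) : α :=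
  pdt F t x - pdt φ t x • pdxphi φ F t x

/-- Matrix-vector multiplication for 2×2 matrices given as `Fin 2 → Fin 2 → ℝ`. -/
def mv (M : Fin 2 → Fin 2 → ℝ) (v : Fin 2 → ℝ) : Fin 2 → ℝ := fun i => ∑ j, M i j * v j

/-- The identity matrix. -/
def idm : Fin 2 → Fin 2 → ℝ := fun i j => if i = j then 1 else 0

/-- The coefficient matrix `𝒜(ū, ∂φ) = (∂ₓφ)⁻¹ (A(ū) - (∂ₜφ) Id)`. -/
noncomputable def calA (A : (Fin 2 → ℝ) → Fin 2 → Fin 2 → ℝ) (ub : ℝ → ℝ → Fin 2 → ℝ)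
    (φ : ℝ → ℝ → ℝ) (t x : ℝ) : Fin 2 → Fin 2 → ℝ :=
  (pdx φ t x)⁻¹ • (A (ub t x) - pdt φ t x • idm)

section helpers
variable {α : Type*} [NormedAddCommGroup α] [NormedSpace ℝ α]

def SmG (F : ℝ → ℝ → α) : Prop := ContDiff ℝ (⊤ : ℕ∞) fun p : ℝ × ℝ => F p.1 p.2

lemma hasDerivAt_line1 (t x : ℝ) : HasDerivAt (fun s : ℝ => (s, x)) ((1:ℝ), (0:ℝ)) t :=
  (hasDerivAt_id t).prodMk (hasDerivAt_const t x)

lemma hasDerivAt_line2 (t x : ℝ) : HasDerivAt (fun y : ℝ => (t, y)) ((0:ℝ), (1:ℝ)) x :=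
  (hasDerivAt_const x t).prodMk (hasDerivAt_id x)

lemma SmG.dt {F : ℝ → ℝ → α} (hF : SmG F) (t x : ℝ) :
    HasDerivAt (fun s => F s x) (pdt F t x) t := by
  have h := ((hF.differentiable (by simp) (t, x)).hasFDerivAt.comp_hasDerivAt t
    (hasDerivAt_line1 t x))
  exact h.differentiableAt.hasDerivAt

lemma SmG.dx {F : ℝ → ℝ → α} (hF : SmG F) (t x : ℝ) :
    HasDerivAt (fun y => F t y) (pdx F t x) x := by
  have h := ((hF.differentiable (by simp) (t, x)).hasFDerivAt.comp_hasDerivAt x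
    (hasDerivAt_line2 t x))
  exact h.differentiableAt.hasDerivAt

lemma SmG.pdt_eq {F : ℝ → ℝ → α} (hF : SmG F) (t x : ℝ) :
    pdt F t x = fderiv ℝ (fun p : ℝ × ℝ => F p.1 p.2) (t, x) (1, 0) := by
  have h := ((hF.differentiable (by simp) (t, x)).hasFDerivAt.comp_hasDerivAt t
    (hasDerivAt_line1 t x)).deriv
  rw [← h]; rfl

lemma SmG.pdx_eq {F : ℝ → ℝ → α} (hF : SmG F) (t x : ℝ) :
    pdx F t x = fderiv ℝ (fun p : ℝ × ℝ => F p.1 p.2) (t, x) (0, 1) := by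
  have h := ((hF.differentiable (by simp) (t, x)).hasFDerivAt.comp_hasDerivAt x
    (hasDerivAt_line2 t x)).deriv
  rw [← h]; rfl

lemma SmG.pdtS {F : ℝ → ℝ → α} (hF : SmG F) : SmG (pdt F) := by
  have h : (fun p : ℝ × ℝ => pdt F p.1 p.2)
      = fun p : ℝ × ℝ => fderiv ℝ (fun q : ℝ × ℝ => F q.1 q.2) p (1, 0) :=
    funext fun p => hF.pdt_eq p.1 p.2
  unfold SmG
  rw [h]
  exact (hF.fderiv_right (by simp)).clm_apply contDiff_const

lemma SmG.pdxS {F : ℝ → ℝ → α} (hF : SmG F) : SmG (pdx F) := by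
  have h : (fun p : ℝ × ℝ => pdx F p.1 p.2)
      = fun p : ℝ × ℝ => fderiv ℝ (fun q : ℝ × ℝ => F q.1 q.2) p (0, 1) :=
    funext fun p => hF.pdx_eq p.1 p.2
  unfold SmG
  rw [h]
  exact (hF.fderiv_right (by simp)).clm_apply contDiff_const

lemma SmG.clairaut {F : ℝ → ℝ → α} (hF : SmG F) (t x : ℝ) :
    pdx (pdt F) t x = pdt (pdx F) t x := by
  set G : ℝ × ℝ → α := fun p => F p.1 p.2 with hG
  have hGd : ContDiff ℝ (⊤ : ℕ∞) G := hF
  have hfd : Differentiable ℝ (fderiv ℝ G) := (hGd.fderiv_right (m := 1) (by exact WithTop.coe_le_coe.2 le_top)).differentiable one_ne_zero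
  have key : ∀ v w : ℝ × ℝ, fderiv ℝ (fun p : ℝ × ℝ => fderiv ℝ G p v) (t, x) w
      = fderiv ℝ (fderiv ℝ G) (t, x) w v := by
    intro v w
    rw [fderiv_clm_apply (hfd (t, x)) (differentiableAt_const v)]
    simp
  have hsymm := (hGd.contDiffAt (x := (t, x))).isSymmSndFDerivAt (by simp; exact WithTop.coe_le_coe.2 le_top)
  have e1 : pdx (pdt F) t x
      = fderiv ℝ (fun p : ℝ × ℝ => fderiv ℝ G p (1, 0)) (t, x) (0, 1) := by
    have h2 := (hF.pdtS).pdx_eq t x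
    have hfun : (fun p : ℝ × ℝ => pdt F p.1 p.2) = fun p : ℝ × ℝ => fderiv ℝ G p (1, 0) :=
      funext fun p => hF.pdt_eq p.1 p.2
    rw [h2, hfun]
  have e2 : pdt (pdx F) t x
      = fderiv ℝ (fun p : ℝ × ℝ => fderiv ℝ G p (0, 1)) (t, x) (1, 0) := by
    have h2 := (hF.pdxS).pdt_eq t x
    have hfun : (fun p : ℝ × ℝ => pdx F p.1 p.2) = fun p : ℝ × ℝ => fderiv ℝ G p (0, 1) :=
      funext fun p => hF.pdx_eq p.1 p.2
    rw [h2, hfun]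
  rw [e1, e2, key, key]
  exact hsymm (0, 1) (1, 0)

end helpers

section pi
variable {ι : Type*} [Fintype ι] {α : Type*} [NormedAddCommGroup α]
  [NormedSpace ℝ α]

lemma SmG.cmp {V : ℝ → ℝ → ι → α} (hV : SmG V) (i : ι) : SmG (fun t x => V t x i) :=
  contDiff_pi.1 hV i

lemma SmG.pdt_apply {V : ℝ → ℝ → ι → α} (hV : SmG V) (t x : ℝ) (i : ι) :
    pdt V t x i = pdt (fun t x => V t x i) t x := by
  show deriv (fun s => V s x) t i = _
  rw [deriv_pi (fun j => ((hV.cmp j).dt t x).differentiableAt)]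
  rfl

lemma SmG.pdx_apply {V : ℝ → ℝ → ι → α} (hV : SmG V) (t x : ℝ) (i : ι) :
    pdx V t x i = pdx (fun t x => V t x i) t x := by
  show deriv (fun y => V t y) x i = _
  rw [deriv_pi (fun j => ((hV.cmp j).dx t x).differentiableAt)]
  rfl

end pi

section chain
variable {β γ : Type*} [NormedAddCommGroup β] [NormedSpace ℝ β] [NormedAddCommGroup γ]
  [NormedSpace ℝ γ]

lemma pdt_comp {g : β → γ} (hg : ContDiff ℝ (⊤ : ℕ∞) g) {V : ℝ → ℝ → β} (hV : SmG V) (t x : ℝ) :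
    pdt (fun t x => g (V t x)) t x = fderiv ℝ g (V t x) (pdt V t x) := by
  have h := ((hg.differentiable (by simp) (V t x)).hasFDerivAt.comp_hasDerivAt t
    (hV.dt t x)).deriv
  rw [← h]; rfl

lemma pdx_comp {g : β → γ} (hg : ContDiff ℝ (⊤ : ℕ∞) g) {V : ℝ → ℝ → β} (hV : SmG V) (t x : ℝ) :
    pdx (fun t x => g (V t x)) t x = fderiv ℝ g (V t x) (pdx V t x) := by
  have h := ((hg.differentiable (by simp) (V t x)).hasFDerivAt.comp_hasDerivAt x
    (hV.dx t x)).deriv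
  rw [← h]; rfl

lemma SmG.comp_left {g : β → γ} (hg : ContDiff ℝ (⊤ : ℕ∞) g) {V : ℝ → ℝ → β} (hV : SmG V) :
    SmG (fun t x => g (V t x)) := hg.comp hV

end chain

lemma fderiv_entry {A : (Fin 2 → ℝ) → Fin 2 → Fin 2 → ℝ} (hA : ContDiff ℝ (⊤ : ℕ∞) A)
    (y v : Fin 2 → ℝ) (i j : Fin 2) :
    fderiv ℝ A y v i j = fderiv ℝ (fun w => A w i j) y v := by
  have h1 : fderiv ℝ A y = ContinuousLinearMap.pi fun i => fderiv ℝ (fun w => A w i) y :=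
    fderiv_pi fun i => ((contDiff_pi.1 hA i).differentiable (by simp)).differentiableAt
  have h2 : fderiv ℝ (fun w => A w i) y
      = ContinuousLinearMap.pi fun j => fderiv ℝ (fun w => A w i j) y :=
    fderiv_pi fun j =>
      ((contDiff_pi.1 (contDiff_pi.1 hA i) j).differentiable (by simp)).differentiableAt
  rw [h1, ContinuousLinearMap.pi_apply, h2, ContinuousLinearMap.pi_apply]

set_option maxHeartbeats 4000000 in
/-- **Alinhac's good unknown cancellation (1D).** If `u` solves
`∂ₜu + 𝒜(ū,∂φ)∂ₓu + Bu = f` with `∂ₓφ > 0`, then `u̇^φ = ∂ₜu - (∂ₜφ)∂ₓ^φu` satisfies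
`∂ₜu̇^φ + 𝒜(ū,∂φ)∂ₓu̇^φ + A'(ū)[ū̇^φ]∂ₓ^φu + B u̇^φ = ḟ^φ - Ḃ^φ u`;
no second derivatives of `φ` appear. -/
theorem stmt6 (A : (Fin 2 → ℝ) → Fin 2 → Fin 2 → ℝ) (B : ℝ → ℝ → Fin 2 → Fin 2 → ℝ)
    (u ub f : ℝ → ℝ → Fin 2 → ℝ) (φ : ℝ → ℝ → ℝ)
    (hA : ContDiff ℝ (⊤ : ℕ∞) A)
    (hu : ContDiff ℝ (⊤ : ℕ∞) fun p : ℝ × ℝ => u p.1 p.2)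
    (hub : ContDiff ℝ (⊤ : ℕ∞) fun p : ℝ × ℝ => ub p.1 p.2)
    (hf : ContDiff ℝ (⊤ : ℕ∞) fun p : ℝ × ℝ => f p.1 p.2)
    (hB : ContDiff ℝ (⊤ : ℕ∞) fun p : ℝ × ℝ => B p.1 p.2)
    (hφ : ContDiff ℝ (⊤ : ℕ∞) fun p : ℝ × ℝ => φ p.1 p.2)
    (hφx : ∀ t x, 0 < pdx φ t x)
    (heq : ∀ t x, pdt u t x + mv (calA A ub φ t x) (pdx u t x) + mv (B t x) (u t x) = f t x) :
    ∀ t x,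
      pdt (pdtphi φ u) t x + mv (calA A ub φ t x) (pdx (pdtphi φ u) t x)
          + mv (fderiv ℝ A (ub t x) (pdtphi φ ub t x)) (pdxphi φ u t x)
          + mv (B t x) (pdtphi φ u t x)
        = pdtphi φ f t x - mv (pdtphi φ B t x) (u t x) := by
  have hφS : SmG φ := hφ
  have huS : SmG u := hu
  have hubS : SmG ub := hub
  have hfS : SmG f := hf
  have hBS : SmG B := hB
  have hui : ∀ i : Fin 2, SmG (fun a b => u a b i) := fun i => huS.cmp i
  have hBij : ∀ i j : Fin 2, SmG (fun a b => B a b i j) := fun i j => (hBS.cmp i).cmp j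
  have hAij : ∀ i j : Fin 2, ContDiff ℝ (⊤ : ℕ∞) (fun w => A w i j) := fun i j =>
    contDiff_pi.1 (contDiff_pi.1 hA i) j
  have haij : ∀ i j : Fin 2, SmG (fun a b => A (ub a b) i j) := fun i j =>
    SmG.comp_left (hAij i j) hubS
  have Ru : ∀ (i : Fin 2) (s y : ℝ), pdtphi φ u s y i =
      pdt (fun a b => u a b i) s y
        - pdt φ s y * ((pdx φ s y)⁻¹ * pdx (fun a b => u a b i) s y) := by
    intro i s y
    simp [pdtphi, pdxphi, smul_eq_mul, huS.pdt_apply s y i, huS.pdx_apply s y i]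
  have Rxu : ∀ (i : Fin 2) (s y : ℝ), pdxphi φ u s y i =
      (pdx φ s y)⁻¹ * pdx (fun a b => u a b i) s y := by
    intro i s y
    simp [pdxphi, smul_eq_mul, huS.pdx_apply s y i]
  have Rf : ∀ (i : Fin 2) (s y : ℝ), pdtphi φ f s y i =
      pdt (fun a b => f a b i) s y
        - pdt φ s y * ((pdx φ s y)⁻¹ * pdx (fun a b => f a b i) s y) := by
    intro i s y
    simp [pdtphi, pdxphi, smul_eq_mul, hfS.pdt_apply s y i, hfS.pdx_apply s y i]
  have RB : ∀ (i j : Fin 2) (s y : ℝ), pdtphi φ B s y i j =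
      pdt (fun a b => B a b i j) s y
        - pdt φ s y * ((pdx φ s y)⁻¹ * pdx (fun a b => B a b i j) s y) := by
    intro i j s y
    simp [pdtphi, pdxphi, smul_eq_mul, hBS.pdt_apply s y i, (hBS.cmp i).pdt_apply s y j,
      hBS.pdx_apply s y i, (hBS.cmp i).pdx_apply s y j]
  intro t x
  have Jne : pdx φ t x ≠ 0 := ne_of_gt (hφx t x)
  have hφt_t := hφS.pdtS.dt t x
  have hφx_t := hφS.pdxS.dt t x
  have hφt_x := hφS.pdtS.dx t x
  have hφx_x := hφS.pdxS.dx t x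
  have hinv_t := hφx_t.inv Jne
  have hinv_x := hφx_x.inv Jne
  have E1 : ∀ i : Fin 2, pdt (pdtphi φ u) t x i =
      pdt (pdt (fun a b => u a b i)) t x -
        (pdt (pdt φ) t x * ((pdx φ t x)⁻¹ * pdx (fun a b => u a b i) t x) +
          pdt φ t x * (-pdt (pdx φ) t x / pdx φ t x ^ 2 * pdx (fun a b => u a b i) t x +
            (pdx φ t x)⁻¹ * pdt (pdx (fun a b => u a b i)) t x)) := by
    intro i
    have hD : ∀ j : Fin 2, HasDerivAt (fun s => pdt (fun a b => u a b j) s x -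
        pdt φ s x * ((pdx φ s x)⁻¹ * pdx (fun a b => u a b j) s x))
        (pdt (pdt (fun a b => u a b j)) t x -
          (pdt (pdt φ) t x * ((pdx φ t x)⁻¹ * pdx (fun a b => u a b j) t x) +
            pdt φ t x * (-pdt (pdx φ) t x / pdx φ t x ^ 2 * pdx (fun a b => u a b j) t x +
              (pdx φ t x)⁻¹ * pdt (pdx (fun a b => u a b j)) t x))) t := fun j =>
      ((hui j).pdtS.dt t x).sub (hφt_t.mul (hinv_t.mul ((hui j).pdxS.dt t x)))
    have hdp : ∀ j : Fin 2, DifferentiableAt ℝ (fun s => pdtphi φ u s x j) t := by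
      intro j
      have hrw : (fun s => pdtphi φ u s x j) = fun s =>
          pdt (fun a b => u a b j) s x
            - pdt φ s x * ((pdx φ s x)⁻¹ * pdx (fun a b => u a b j) s x) :=
        funext fun s => Ru j s x
      rw [hrw]; exact (hD j).differentiableAt
    have hstep : pdt (pdtphi φ u) t x i = deriv (fun s => pdtphi φ u s x i) t := by
      show deriv (fun s => pdtphi φ u s x) t i = _
      rw [deriv_pi hdp]
    have hrw : (fun s => pdtphi φ u s x i) = fun s =>
        pdt (fun a b => u a b i) s x
          - pdt φ s x * ((pdx φ s x)⁻¹ * pdx (fun a b => u a b i) s x) :=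
      funext fun s => Ru i s x
    rw [hstep, hrw]
    exact (hD i).deriv
  have E2 : ∀ i : Fin 2, pdx (pdtphi φ u) t x i =
      pdx (pdt (fun a b => u a b i)) t x -
        (pdx (pdt φ) t x * ((pdx φ t x)⁻¹ * pdx (fun a b => u a b i) t x) +
          pdt φ t x * (-pdx (pdx φ) t x / pdx φ t x ^ 2 * pdx (fun a b => u a b i) t x +
            (pdx φ t x)⁻¹ * pdx (pdx (fun a b => u a b i)) t x)) := by
    intro i
    have hD : ∀ j : Fin 2, HasDerivAt (fun y => pdt (fun a b => u a b j) t y -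
        pdt φ t y * ((pdx φ t y)⁻¹ * pdx (fun a b => u a b j) t y))
        (pdx (pdt (fun a b => u a b j)) t x -
          (pdx (pdt φ) t x * ((pdx φ t x)⁻¹ * pdx (fun a b => u a b j) t x) +
            pdt φ t x * (-pdx (pdx φ) t x / pdx φ t x ^ 2 * pdx (fun a b => u a b j) t x +
              (pdx φ t x)⁻¹ * pdx (pdx (fun a b => u a b j)) t x))) x := fun j =>
      ((hui j).pdtS.dx t x).sub (hφt_x.mul (hinv_x.mul ((hui j).pdxS.dx t x)))
    have hdp : ∀ j : Fin 2, DifferentiableAt ℝ (fun y => pdtphi φ u t y j) x := by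
      intro j
      have hrw : (fun y => pdtphi φ u t y j) = fun y =>
          pdt (fun a b => u a b j) t y
            - pdt φ t y * ((pdx φ t y)⁻¹ * pdx (fun a b => u a b j) t y) :=
        funext fun y => Ru j t y
      rw [hrw]; exact (hD j).differentiableAt
    have hstep : pdx (pdtphi φ u) t x i = deriv (fun y => pdtphi φ u t y i) x := by
      show deriv (fun y => pdtphi φ u t y) x i = _
      rw [deriv_pi hdp]
    have hrw : (fun y => pdtphi φ u t y i) = fun y =>
        pdt (fun a b => u a b i) t y
          - pdt φ t y * ((pdx φ t y)⁻¹ * pdx (fun a b => u a b i) t y) :=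
      funext fun y => Ru i t y
    rw [hstep, hrw]
    exact (hD i).deriv
  have hA' : ∀ i j : Fin 2, fderiv ℝ A (ub t x) (pdtphi φ ub t x) i j =
      pdt (fun a b => A (ub a b) i j) t x
        - pdt φ t x * ((pdx φ t x)⁻¹ * pdx (fun a b => A (ub a b) i j) t x) := by
    intro i j
    rw [fderiv_entry hA]
    have hval : pdtphi φ ub t x = pdt ub t x - pdt φ t x • ((pdx φ t x)⁻¹ • pdx ub t x) := rfl
    have h1 : fderiv ℝ (fun w => A w i j) (ub t x) (pdt ub t x)
        = pdt (fun a b => A (ub a b) i j) t x := (pdt_comp (hAij i j) hubS t x).symm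
    have h2 : fderiv ℝ (fun w => A w i j) (ub t x) (pdx ub t x)
        = pdx (fun a b => A (ub a b) i j) t x := (pdx_comp (hAij i j) hubS t x).symm
    rw [hval, map_sub, map_smul, map_smul, h1, h2]
    simp [smul_eq_mul]
  have hfeq : ∀ i : Fin 2, (fun a b => f a b i) = (fun a b =>
      pdt (fun a b => u a b i) a b
      + ((pdx φ a b)⁻¹ * (A (ub a b) i 0 - pdt φ a b * idm i 0)) * pdx (fun a b => u a b 0) a b
      + ((pdx φ a b)⁻¹ * (A (ub a b) i 1 - pdt φ a b * idm i 1)) * pdx (fun a b => u a b 1) a b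
      + (B a b i 0 * u a b 0 + B a b i 1 * u a b 1)) := by
    intro i; funext a b
    have h := congrFun (heq a b) i
    simp only [Pi.add_apply, mv, Fin.sum_univ_two, calA, Pi.smul_apply, Pi.sub_apply,
      smul_eq_mul, huS.pdt_apply a b i, huS.pdx_apply a b 0, huS.pdx_apply a b 1] at h
    linarith [h]
  have hft : ∀ i : Fin 2, pdt (fun a b => f a b i) t x = pdt (pdt (fun a b => u a b i)) t x + (((-pdt (pdx φ) t x / pdx φ t x ^ 2) * (A (ub t x) i 0 - pdt φ t x * idm i 0) + (pdx φ t x)⁻¹ * (pdt (fun a b => A (ub a b) i 0) t x - (pdt (pdt φ) t x) * idm i 0)) * pdx (fun a b => u a b 0) t x + ((pdx φ t x)⁻¹ * (A (ub t x) i 0 - pdt φ t x * idm i 0)) * pdt (pdx (fun a b => u a b 0)) t x) + (((-pdt (pdx φ) t x / pdx φ t x ^ 2) * (A (ub t x) i 1 - pdt φ t x * idm i 1) + (pdx φ t x)⁻¹ * (pdt (fun a b => A (ub a b) i 1) t x - (pdt (pdt φ) t x) * idm i 1)) * pdx (fun a b => u a b 1) t x + ((pdx φ t x)⁻¹ * (A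 (ub t x) i 1 - pdt φ t x * idm i 1)) * pdt (pdx (fun a b => u a b 1)) t x) + ((pdt (fun a b => B a b i 0) t x * u t x 0 + B t x i 0 * pdt (fun a b => u a b 0) t x) + (pdt (fun a b => B a b i 1) t x * u t x 1 + B t x i 1 * pdt (fun a b => u a b 1) t x)) := by
    intro i
    rw [hfeq i]
    have T2 := (hinv_t.mul (((haij i 0).dt t x).sub (hφt_t.mul_const (idm i 0)))).mul
      ((hui 0).pdxS.dt t x)
    have T3 := (hinv_t.mul (((haij i 1).dt t x).sub (hφt_t.mul_const (idm i 1)))).mul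
      ((hui 1).pdxS.dt t x)
    have T4 := ((hBij i 0).dt t x).mul ((hui 0).dt t x)
    have T5 := ((hBij i 1).dt t x).mul ((hui 1).dt t x)
    exact (((((hui i).pdtS.dt t x).add T2).add T3).add (T4.add T5)).deriv
  have hfx : ∀ i : Fin 2, pdx (fun a b => f a b i) t x = pdx (pdt (fun a b => u a b i)) t x + (((-pdx (pdx φ) t x / pdx φ t x ^ 2) * (A (ub t x) i 0 - pdt φ t x * idm i 0) + (pdx φ t x)⁻¹ * (pdx (fun a b => A (ub a b) i 0) t x - (pdx (pdt φ) t x) * idm i 0)) * pdx (fun a b => u a b 0) t x + ((pdx φ t x)⁻¹ * (A (ub t x) i 0 - pdt φ t x * idm i 0)) * pdx (pdx (fun a b => u a b 0)) t x) + (((-pdx (pdx φ) t x / pdx φ t x ^ 2) * (A (ub t x) i 1 - pdt φ t x * idm i 1) + (pdx φ t x)⁻¹ * (pdx (fun a b => A (ub a b) i 1) t x - (pdx (pdt φ) t x) * idm i 1)) * pdx (fun a b => u a b 1) t x + ((pdx φ t x)⁻¹ * (A (ub t x) i 1 - pdt φ t x * idm i 1)) * pdx (pdx (fun a b => u a b 1))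 t x) + ((pdx (fun a b => B a b i 0) t x * u t x 0 + B t x i 0 * pdx (fun a b => u a b 0) t x) + (pdx (fun a b => B a b i 1) t x * u t x 1 + B t x i 1 * pdx (fun a b => u a b 1) t x)) := by
    intro i
    rw [hfeq i]
    have T2 := (hinv_x.mul (((haij i 0).dx t x).sub (hφt_x.mul_const (idm i 0)))).mul
      ((hui 0).pdxS.dx t x)
    have T3 := (hinv_x.mul (((haij i 1).dx t x).sub (hφt_x.mul_const (idm i 1)))).mul
      ((hui 1).pdxS.dx t x)
    have T4 := ((hBij i 0).dx t x).mul ((hui 0).dx t x)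
    have T5 := ((hBij i 1).dx t x).mul ((hui 1).dx t x)
    exact (((((hui i).pdtS.dx t x).add T2).add T3).add (T4.add T5)).deriv
  funext i
  simp only [Pi.add_apply, Pi.sub_apply, mv, Fin.sum_univ_two, calA, Pi.smul_apply,
    smul_eq_mul]
  rw [Rf i t x, hft i, hfx i, RB i 0 t x, RB i 1 t x, Ru 0 t x, Ru 1 t x,
    Rxu 0 t x, Rxu 1 t x, hA' i 0, hA' i 1, E1 i, E2 0, E2 1,
    hφS.clairaut t x, (hui i).clairaut t x, (hui 0).clairaut t x, (hui 1).clairaut t x]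
  fin_cases i <;>
    simp only [idm, Fin.isValue, Fin.zero_eta, Fin.mk_one, one_ne_zero, zero_ne_one,
        if_false, reduceIte] <;>
    field_simp <;>
    ring
end

section
/- (Tangent direction at the contact point determines the Kreiss–Lopatinskiĭ quantity for the fully nonlinear free-boundary condition.) Suppose u, u_i are smooth ℝ²-valued functions at the boundary x = 0, ẋ̲ ∈ ℝ, A = A(u|_{x=0}) a 2×2 matrix with positive eigenvalue λ₊ and unit eigenvector e₊, such that ẋ̲ is not an eigenvalue of A, the jump condition (ẋ̲ Id - A)(∂ₓ^φu - ∂ₓ^φu_i) = ∂ₜ^φu_i + A(u_i)∂ₓ^φu_i holds at x = 0, and ∂ₓ^φu - ∂ₓ^φu_i ≠ 0 at x = 0. Let μ be a unit vector with μ · (∂ₜ^φu_i + A(u_i)∂ₓ^φu_i)|_{x=0} = 0 (it exists and is unique up to sign). Then, with ν₍₂₎ = ((Id - ẋ̲A⁻¹)²)ᵀ((∂ₓ^φu - ∂ₓ^φu_i)⊥), one has the identity |ν₍₂₎ · e₊| = ((λ₊ - ẋ̲)³/λ₊²) · (|∂ₓ^φu - ∂ₓ^φu_i| / |(ẋ̲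 Id - A)ᵀμ|) · |μ · e₊| at x = 0. -/
/-!
Let `w = (ẋ̲ Id - A)ᵀ μ`. The jump condition gives `w · p = μ · (ẋ̲ Id - A) p = μ · q = 0`, so in
the plane `p` is a multiple of `w⊥`; hence `p⊥` is parallel to `w` and
`|p⊥ · e₊| = (|p| / |w|) |w · e₊|`, while `w · e₊ = μ · (ẋ̲ Id - A) e₊ = (ẋ̲ - λ₊) μ · e₊`.
The remaining factor `((λ₊ - ẋ̲) / λ₊)²` appears because `e₊` is an eigenvector of
`Id - ẋ̲ A⁻¹` with eigenvalue `1 - ẋ̲ / λ₊`.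
-/

open Matrix

/-- Euclidean length of a plane vector. -/
noncomputable def len (v : Fin 2 → ℝ) : ℝ := Real.sqrt (v ⬝ᵥ v)

namespace Matrix

theorem transpose_mulVec_dotProduct {m n R : Type*} [Fintype m] [Fintype n] [CommSemiring R]
    (M : Matrix m n R) (u : m → R) (v : n → R) : (Mᵀ *ᵥ u) ⬝ᵥ v = u ⬝ᵥ (M *ᵥ v) := by
  rw [mulVec_transpose, dotProduct_mulVec]

variable {n K : Type*} [Fintype n] [DecidableEq n] [Field K]

theorem inv_mulVec_eq_inv_smul {A : Matrix n n K} (hA : IsUnit A.det) {c : K} {v : n → K}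
    (hv : A *ᵥ v = c • v) : A⁻¹ *ᵥ v = c⁻¹ • v := by
  have hv' : v = c • A⁻¹ *ᵥ v := by
    rw [← mulVec_smul, ← hv, mulVec_mulVec, nonsing_inv_mul A hA, one_mulVec]
  rcases eq_or_ne c 0 with rfl | hc
  · rw [zero_smul] at hv'
    rw [hv', mulVec_zero, smul_zero]
  · calc A⁻¹ *ᵥ v = c⁻¹ • c • A⁻¹ *ᵥ v := (inv_smul_smul₀ hc _).symm
      _ = c⁻¹ • v := by rw [← hv']

theorem pow_mulVec_eq_pow_smul {B : Matrix n n K} {c : K} {v : n → K} (hv : B *ᵥ v = c • v)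
    (k : ℕ) : (B ^ k) *ᵥ v = c ^ k • v := by
  induction k with
  | zero => simp
  | succ k ih => rw [pow_succ, ← mulVec_mulVec, hv, mulVec_smul, ih, smul_smul, pow_succ']

end Matrix

theorem perp_smul (c : ℝ) (v : Fin 2 → ℝ) : perp (c • v) = c • perp v := by
  ext i; fin_cases i <;> simp [perp]

theorem perp_perp (v : Fin 2 → ℝ) : perp (perp v) = -v := by
  ext i; fin_cases i <;> simp [perp]

theorem perp_dotProduct_perp (v : Fin 2 → ℝ) : perp v ⬝ᵥ perp v = v ⬝ᵥ v := by
  simp [perp, dotProduct, Fin.sum_univ_two]; ring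

theorem len_smul (c : ℝ) (v : Fin 2 → ℝ) : len (c • v) = |c| * len v := by
  rw [len, len, smul_dotProduct, dotProduct_smul, smul_eq_mul, smul_eq_mul, ← mul_assoc,
    Real.sqrt_mul (mul_self_nonneg c), Real.sqrt_mul_self_eq_abs]

theorem len_ne_zero {v : Fin 2 → ℝ} (hv : v ≠ 0) : len v ≠ 0 := by
  have hvv : 0 ≤ v ⬝ᵥ v := Finset.sum_nonneg fun i _ => mul_self_nonneg (v i)
  exact (Real.sqrt_ne_zero hvv).mpr (dotProduct_self_eq_zero.not.mpr hv)

theorem dotProduct_self_smul_eq_add_perp (w v : Fin 2 → ℝ) :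
    (w ⬝ᵥ w) • v = (v ⬝ᵥ w) • w + (v ⬝ᵥ perp w) • perp w := by
  ext i; fin_cases i <;> simp [perp, dotProduct, Fin.sum_univ_two] <;> ring

theorem exists_eq_smul_perp_of_dotProduct_eq_zero {v w : Fin 2 → ℝ} (hw : w ≠ 0)
    (h : v ⬝ᵥ w = 0) : ∃ d : ℝ, v = d • perp w := by
  have hww : w ⬝ᵥ w ≠ 0 := dotProduct_self_eq_zero.not.mpr hw
  refine ⟨(v ⬝ᵥ perp w) / (w ⬝ᵥ w), ?_⟩
  have := dotProduct_self_smul_eq_add_perp w v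
  rw [h, zero_smul, zero_add] at this
  rw [div_eq_inv_mul, mul_smul, ← this, smul_smul, inv_mul_cancel₀ hww, one_smul]

theorem abs_perp_dotProduct_eq {p w : Fin 2 → ℝ} (hw : w ≠ 0) (hpw : p ⬝ᵥ w = 0)
    (e : Fin 2 → ℝ) : |perp p ⬝ᵥ e| = len p / len w * |w ⬝ᵥ e| := by
  obtain ⟨d, rfl⟩ := exists_eq_smul_perp_of_dotProduct_eq_zero hw hpw
  rw [perp_smul, perp_perp, len_smul, len, perp_dotProduct_perp, ← len,
    mul_div_cancel_right₀ _ (len_ne_zero hw), smul_dotProduct, neg_dotProduct, smul_eq_mul,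
    abs_mul, abs_neg]

theorem stmt9_general (A : Matrix (Fin 2) (Fin 2) ℝ) (lp xd : ℝ) (ep μ p q : Fin 2 → ℝ)
    (hlp : 0 < lp) (hdet : IsUnit A.det)
    (heig : A *ᵥ ep = lp • ep)
    (hxd : xd < lp)
    (hMdet : IsUnit (xd • (1 : Matrix (Fin 2) (Fin 2) ℝ) - A).det)
    (hjump : (xd • (1 : Matrix (Fin 2) (Fin 2) ℝ) - A) *ᵥ p = q)
    (hμ : μ ⬝ᵥ μ = 1) (hμq : μ ⬝ᵥ q = 0) :
    |((((1 : Matrix (Fin 2) (Fin 2) ℝ) - xd • A⁻¹) ^ 2)ᵀ *ᵥ perp p) ⬝ᵥ ep| =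
      ((lp - xd) ^ 3 / lp ^ 2) *
        (len p / len ((xd • (1 : Matrix (Fin 2) (Fin 2) ℝ) - A)ᵀ *ᵥ μ)) * |μ ⬝ᵥ ep| := by
  set M : Matrix (Fin 2) (Fin 2) ℝ := xd • 1 - A
  have hpw : p ⬝ᵥ (Mᵀ *ᵥ μ) = 0 := by
    rw [dotProduct_comm, transpose_mulVec_dotProduct, hjump, hμq]
  have hw : Mᵀ *ᵥ μ ≠ 0 := fun h ↦ by
    have hμ0 : μ = 0 := eq_zero_of_mulVec_eq_zero (by simpa using hMdet.ne_zero) h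
    simp [hμ0] at hμ
  have hMep : M *ᵥ ep = (xd - lp) • ep := by
    rw [sub_mulVec, smul_mulVec, one_mulVec, heig, sub_smul]
  have hBep : (1 - xd • A⁻¹) *ᵥ ep = ((lp - xd) / lp) • ep := by
    rw [sub_mulVec, one_mulVec, smul_mulVec, inv_mulVec_eq_inv_smul hdet heig, smul_smul,
      ← one_sub_div hlp.ne', sub_smul, one_smul, div_eq_mul_inv]
  rw [transpose_mulVec_dotProduct, pow_mulVec_eq_pow_smul hBep, dotProduct_smul, smul_eq_mul,
    abs_mul, abs_perp_dotProduct_eq hw hpw, transpose_mulVec_dotProduct, hMep, dotProduct_smul,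
    smul_eq_mul, abs_mul, abs_sq, abs_sub_comm, abs_of_pos (sub_pos.mpr hxd)]
  ring

/-- **The Kreiss–Lopatinskiĭ quantity for the fully nonlinear free-boundary condition.**
With `p = (∂ₓ^φu - ∂ₓ^φu_i)|_{x=0} ≠ 0`, `q = (∂ₜ^φu_i + A(u_i)∂ₓ^φu_i)|_{x=0}`, the jump
condition `(ẋ̲ Id - A) p = q`, an invertible `A = A(u|_{x=0})` with eigenvalue `λ₊ > ẋ̲` and
unit eigenvector `e₊`, `ẋ̲` not an eigenvalue of `A`, and `μ` a unit vector with `μ·q = 0`: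
for `ν₍₂₎ = ((Id - ẋ̲A⁻¹)²)ᵀ (p⊥)` one has
`|ν₍₂₎·e₊| = ((λ₊-ẋ̲)³/λ₊²) (|p| / |(ẋ̲Id-A)ᵀμ|) |μ·e₊|`. -/
theorem stmt9 (A : Matrix (Fin 2) (Fin 2) ℝ) (lp xd : ℝ) (ep μ p q : Fin 2 → ℝ)
    (hlp : 0 < lp) (hdet : IsUnit A.det)
    (he : ep ⬝ᵥ ep = 1) (heig : A *ᵥ ep = lp • ep)
    (hxd : xd < lp)
    (hMdet : IsUnit (xd • (1 : Matrix (Fin 2) (Fin 2) ℝ) - A).det)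
    (hjump : (xd • (1 : Matrix (Fin 2) (Fin 2) ℝ) - A) *ᵥ p = q)
    (hp : p ≠ 0)
    (hμ : μ ⬝ᵥ μ = 1) (hμq : μ ⬝ᵥ q = 0) :
    |((((1 : Matrix (Fin 2) (Fin 2) ℝ) - xd • A⁻¹) ^ 2)ᵀ *ᵥ perp p) ⬝ᵥ ep| =
      ((lp - xd) ^ 3 / lp ^ 2) *
        (len p / len ((xd • (1 : Matrix (Fin 2) (Fin 2) ℝ) - A)ᵀ *ᵥ μ)) * |μ ⬝ᵥ ep| :=
  stmt9_general A lp xd ep μ p q hlp hdet heig hxd hMdet hjump hμ hμq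
end

section
/- (Nondegeneracy of the shock front map.) Let f₀, f ∈ C^∞(𝒰; ℝ²) with f₀'(u) invertible for all u ∈ 𝒰, set A(u) = f₀'(u)⁻¹f'(u), and suppose at a point (uˡ, uʳ) with f₀(uʳ) ≠ f₀(uˡ) the Rankine–Hugoniot speed χ = χ(uˡ, uʳ) is not an eigenvalue of A(uˡ). Then the partial derivative with respect to uˡ of the map (uˡ, uʳ) ↦ (Φ(uˡ, uʳ), χ(uˡ, uʳ)) ∈ ℝ² is an invertible linear map ℝ² → ℝ²; explicitly it equals u̇ˡ ↦ W f₀'(uˡ)(χ Id - A(uˡ)) u̇ˡ where W : ℝ² → ℝ² is the invertible map W F = ( F · ⟦f₀⟧⊥ , (F · ⟦f₀⟧)/|⟦f₀⟧|² )ᵀ with ⟦f₀⟧ = f₀(uʳ) - f₀(uˡ). -/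
open Matrix ContinuousLinearMap

/-- **Nondegeneracy of the shock front map.** With `A(u) = f₀'(u)⁻¹f'(u)` and, at a
Rankine–Hugoniot point `(uˡ,uʳ)` with `⟦f₀⟧ ≠ 0`, the shock speed `χ` not an eigenvalue of
`A(uˡ)`, the partial derivative in `uˡ` of `(uˡ,uʳ) ↦ (Φ(uˡ,uʳ), χ(uˡ,uʳ))` is the
invertible linear map `u̇ ↦ W f₀'(uˡ)(χ Id - A(uˡ)) u̇`, where
`W F = (F·⟦f₀⟧⊥, F·⟦f₀⟧/|⟦f₀⟧|²)`. -/
theorem stmt16 (𝒰 : Set (Fin 2 → ℝ)) (hU : IsOpen 𝒰)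
    (f0 f : (Fin 2 → ℝ) → (Fin 2 → ℝ))
    (hf0 : ContDiff ℝ (⊤ : ℕ∞) f0) (hf : ContDiff ℝ (⊤ : ℕ∞) f)
    (hinv : ∀ u : Fin 2 → ℝ, Function.Bijective (fderiv ℝ f0 u))
    (A : (Fin 2 → ℝ) → (Fin 2 → ℝ) →L[ℝ] (Fin 2 → ℝ))
    (hA : ∀ u : Fin 2 → ℝ, (fderiv ℝ f0 u).comp (A u) = fderiv ℝ f u)
    (ul ur : Fin 2 → ℝ) (hul : ul ∈ 𝒰) (hur : ur ∈ 𝒰)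
    (hne : f0 ur ≠ f0 ul) (χ₀ : ℝ)
    (hχ : χ₀ = ((f ur - f ul) ⬝ᵥ (f0 ur - f0 ul)) / ((f0 ur - f0 ul) ⬝ᵥ (f0 ur - f0 ul)))
    (hRH : (f ur - f ul) ⬝ᵥ perp (f0 ur - f0 ul) = 0)
    (heig : ∀ v : Fin 2 → ℝ, A ul v = χ₀ • v → v = 0) :
    Function.Bijective
      (fderiv ℝ (fun w : Fin 2 → ℝ =>
        (![(f ur - f w) ⬝ᵥ perp (f0 ur - f0 w),
            ((f ur - f w) ⬝ᵥ (f0 ur - f0 w)) / ((f0 ur - f0 w) ⬝ᵥ (f0 ur - f0 w))] :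
          Fin 2 → ℝ)) ul) ∧
    ∀ v : Fin 2 → ℝ,
      fderiv ℝ (fun w : Fin 2 → ℝ =>
          (![(f ur - f w) ⬝ᵥ perp (f0 ur - f0 w),
              ((f ur - f w) ⬝ᵥ (f0 ur - f0 w)) / ((f0 ur - f0 w) ⬝ᵥ (f0 ur - f0 w))] :
            Fin 2 → ℝ)) ul v =
        ![(fderiv ℝ f0 ul (χ₀ • v - A ul v)) ⬝ᵥ perp (f0 ur - f0 ul),
          ((fderiv ℝ f0 ul (χ₀ • v - A ul v)) ⬝ᵥ (f0 ur - f0 ul)) /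
            ((f0 ur - f0 ul) ⬝ᵥ (f0 ur - f0 ul))] := by
  classical
  set B := fderiv ℝ f0 ul with hBdef
  have hBF : HasFDerivAt f0 B ul := (hf0.differentiable (by simp) ul).hasFDerivAt
  have hFf : HasFDerivAt f (B.comp (A ul)) ul := by
    rw [hA ul]; exact (hf.differentiable (by simp) ul).hasFDerivAt
  have hf0i : ∀ i : Fin 2, HasFDerivAt (fun x => f0 x i) ((proj i).comp B) ul := by
    intro i
    exact ((proj i : (Fin 2 → ℝ) →L[ℝ] ℝ).hasFDerivAt).comp ul hBF
  have hfi : ∀ i : Fin 2, HasFDerivAt (fun x => f x i) ((proj i).comp (B.comp (A ul))) ul := by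
    intro i
    exact ((proj i : (Fin 2 → ℝ) →L[ℝ] ℝ).hasFDerivAt).comp ul hFf
  have hq : (f0 ur 0 - f0 ul 0) * (f0 ur 0 - f0 ul 0)
      + (f0 ur 1 - f0 ul 1) * (f0 ur 1 - f0 ul 1) ≠ 0 := by
    intro h
    apply hne
    funext i
    fin_cases i
    · have : f0 ur 0 - f0 ul 0 = 0 := by nlinarith
      simpa [sub_eq_zero] using this
    · have : f0 ur 1 - f0 ul 1 = 0 := by nlinarith
      simpa [sub_eq_zero] using this
  have hds : (f0 ur - f0 ul) ⬝ᵥ (f0 ur - f0 ul) = (f0 ur 0 - f0 ul 0) * (f0 ur 0 - f0 ul 0)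
      + (f0 ur 1 - f0 ul 1) * (f0 ur 1 - f0 ul 1) := by
    simp [dotProduct, Fin.sum_univ_two]
  have hns : (f ur - f ul) ⬝ᵥ (f0 ur - f0 ul) = (f ur 0 - f ul 0) * (f0 ur 0 - f0 ul 0)
      + (f ur 1 - f ul 1) * (f0 ur 1 - f0 ul 1) := by
    simp [dotProduct, Fin.sum_univ_two]
  rw [hds, hns] at hχ
  have hRH2 : (f ur 1 - f ul 1) * (f0 ur 0 - f0 ul 0)
      = (f ur 0 - f ul 0) * (f0 ur 1 - f0 ul 1) := by
    have h := hRH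
    simp only [dotProduct, perp, Fin.sum_univ_two, Pi.sub_apply,
      Matrix.cons_val_zero, Matrix.cons_val_one, Matrix.head_cons] at h
    linear_combination h
  have he0 : f ur 0 - f ul 0 = χ₀ * (f0 ur 0 - f0 ul 0) := by
    rw [hχ, div_mul_eq_mul_div, eq_div_iff hq]
    linear_combination (-(f0 ur 1 - f0 ul 1)) * hRH2
  have he1 : f ur 1 - f ul 1 = χ₀ * (f0 ur 1 - f0 ul 1) := by
    rw [hχ, div_mul_eq_mul_div, eq_div_iff hq]
    linear_combination (f0 ur 0 - f0 ul 0) * hRH2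
  -- the target derivative
  set G : (Fin 2 → ℝ) →L[ℝ] (Fin 2 → ℝ) :=
    B.comp (χ₀ • ContinuousLinearMap.id ℝ (Fin 2 → ℝ) - A ul) with hG
  set D0 : (Fin 2 → ℝ) →L[ℝ] ℝ :=
    (-(f0 ur 1 - f0 ul 1)) • ((proj 0).comp G) + (f0 ur 0 - f0 ul 0) • ((proj 1).comp G)
    with hD0
  set D1 : (Fin 2 → ℝ) →L[ℝ] ℝ :=
    ((f0 ur 0 - f0 ul 0) * (f0 ur 0 - f0 ul 0)
      + (f0 ur 1 - f0 ul 1) * (f0 ur 1 - f0 ul 1))⁻¹ •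
      ((f0 ur 0 - f0 ul 0) • ((proj 0).comp G) + (f0 ur 1 - f0 ul 1) • ((proj 1).comp G))
    with hD1
  set L : (Fin 2 → ℝ) →L[ℝ] (Fin 2 → ℝ) := ContinuousLinearMap.pi ![D0, D1] with hL
  have hGv : ∀ v, G v = B (χ₀ • v - A ul v) := by
    intro v
    simp only [hG, ContinuousLinearMap.comp_apply, ContinuousLinearMap.sub_apply,
      ContinuousLinearMap.smul_apply, ContinuousLinearMap.coe_id', id_eq]
  have hBv : ∀ v, B (χ₀ • v - A ul v) = χ₀ • B v - B (A ul v) := by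
    intro v
    rw [_root_.map_sub, ContinuousLinearMap.map_smul]
  have hder : HasFDerivAt (fun w : Fin 2 → ℝ =>
      (![(f ur - f w) ⬝ᵥ perp (f0 ur - f0 w),
          ((f ur - f w) ⬝ᵥ (f0 ur - f0 w)) / ((f0 ur - f0 w) ⬝ᵥ (f0 ur - f0 w))] :
        Fin 2 → ℝ)) L ul := by
    refine hasFDerivAt_pi'' (Fin.forall_fin_two.mpr ⟨?_, ?_⟩)
    · simp only [hL, proj_pi, Matrix.cons_val_zero, dotProduct, perp,
        Fin.sum_univ_two, Pi.sub_apply, Matrix.cons_val_one, Matrix.head_cons]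
      have h := (((hfi 0).const_sub (f ur 0)).mul (((hf0i 1).const_sub (f0 ur 1)).neg)).add
        (((hfi 1).const_sub (f ur 1)).mul ((hf0i 0).const_sub (f0 ur 0)))
      refine h.congr_fderiv ?_
      ext v
      simp only [hD0, ContinuousLinearMap.add_apply, ContinuousLinearMap.smul_apply,
        ContinuousLinearMap.comp_apply, ContinuousLinearMap.neg_apply, proj_apply,
        smul_eq_mul]
      rw [hGv v, hBv v]
      simp only [Pi.sub_apply, Pi.smul_apply, smul_eq_mul, Pi.neg_apply]
      rw [he0, he1]
      ring
    · simp only [hL, proj_pi, Matrix.cons_val_one, Matrix.head_cons, dotProduct,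
        Fin.sum_univ_two, Pi.sub_apply, Matrix.cons_val_zero, div_eq_mul_inv]
      have hN := (((hfi 0).const_sub (f ur 0)).mul ((hf0i 0).const_sub (f0 ur 0))).add
        (((hfi 1).const_sub (f ur 1)).mul ((hf0i 1).const_sub (f0 ur 1)))
      have hDq := (((hf0i 0).const_sub (f0 ur 0)).mul ((hf0i 0).const_sub (f0 ur 0))).add
        (((hf0i 1).const_sub (f0 ur 1)).mul ((hf0i 1).const_sub (f0 ur 1)))
      have hinvd := (hasDerivAt_inv hq).comp_hasFDerivAt ul hDq
      have h := hN.mul hinvd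
      refine h.congr_fderiv ?_
      ext v
      simp only [hD1, ContinuousLinearMap.add_apply, ContinuousLinearMap.smul_apply,
        ContinuousLinearMap.comp_apply, ContinuousLinearMap.neg_apply, proj_apply,
        smul_eq_mul, Function.comp]
      rw [hGv v, hBv v]
      simp only [Pi.sub_apply, Pi.smul_apply, smul_eq_mul, Pi.add_apply, Pi.pow_apply, Pi.mul_apply]
      rw [he0, he1]
      field_simp [hq]
      ring
  have hfder : fderiv ℝ (fun w : Fin 2 → ℝ =>
      (![(f ur - f w) ⬝ᵥ perp (f0 ur - f0 w),
          ((f ur - f w) ⬝ᵥ (f0 ur - f0 w)) / ((f0 ur - f0 w) ⬝ᵥ (f0 ur - f0 w))] :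
        Fin 2 → ℝ)) ul = L := hder.fderiv
  have hval : ∀ v : Fin 2 → ℝ, L v =
      ![(B (χ₀ • v - A ul v)) ⬝ᵥ perp (f0 ur - f0 ul),
        ((B (χ₀ • v - A ul v)) ⬝ᵥ (f0 ur - f0 ul)) /
          ((f0 ur - f0 ul) ⬝ᵥ (f0 ur - f0 ul))] := by
    intro v
    refine funext (Fin.forall_fin_two.mpr ⟨?_, ?_⟩)
    · simp only [hL, ContinuousLinearMap.pi_apply, Matrix.cons_val_zero, hD0,
        ContinuousLinearMap.add_apply, ContinuousLinearMap.smul_apply,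
        ContinuousLinearMap.comp_apply, proj_apply, smul_eq_mul,
        dotProduct, perp, Fin.sum_univ_two, Pi.sub_apply,
        Matrix.cons_val_one, Matrix.head_cons]
      rw [hGv v]
      ring
    · simp only [hL, ContinuousLinearMap.pi_apply, Matrix.cons_val_one, Matrix.head_cons, hD1,
        ContinuousLinearMap.add_apply, ContinuousLinearMap.smul_apply,
        ContinuousLinearMap.comp_apply, proj_apply, smul_eq_mul,
        dotProduct, Fin.sum_univ_two, Pi.sub_apply, Matrix.cons_val_zero]
      rw [hGv v]
      field_simp [hq]
  have hker : ∀ v : Fin 2 → ℝ, L v = 0 → v = 0 := by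
    intro v hv
    have h0 : L v 0 = 0 := by rw [hv]; rfl
    have h1 : L v 1 = 0 := by rw [hv]; rfl
    rw [hval v] at h0 h1
    simp only [Matrix.cons_val_zero, Matrix.cons_val_one, Matrix.head_cons,
      dotProduct, perp, Fin.sum_univ_two, Pi.sub_apply, hds] at h0 h1
    have h1' : B (χ₀ • v - A ul v) 0 * (f0 ur 0 - f0 ul 0)
        + B (χ₀ • v - A ul v) 1 * (f0 ur 1 - f0 ul 1) = 0 := by
      rcases div_eq_zero_iff.mp h1 with h | h
      · exact h
      · exact absurd h hq
    have hx0 : B (χ₀ • v - A ul v) 0 = 0 := by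
      have hm : B (χ₀ • v - A ul v) 0 * ((f0 ur 0 - f0 ul 0) * (f0 ur 0 - f0 ul 0)
          + (f0 ur 1 - f0 ul 1) * (f0 ur 1 - f0 ul 1)) = 0 := by
        linear_combination (f0 ur 0 - f0 ul 0) * h1' - (f0 ur 1 - f0 ul 1) * h0
      rcases mul_eq_zero.mp hm with h | h
      · exact h
      · exact absurd h hq
    have hx1 : B (χ₀ • v - A ul v) 1 = 0 := by
      have hm : B (χ₀ • v - A ul v) 1 * ((f0 ur 0 - f0 ul 0) * (f0 ur 0 - f0 ul 0)
          + (f0 ur 1 - f0 ul 1) * (f0 ur 1 - f0 ul 1)) = 0 := by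
        linear_combination (f0 ur 1 - f0 ul 1) * h1' + (f0 ur 0 - f0 ul 0) * h0
      rcases mul_eq_zero.mp hm with h | h
      · exact h
      · exact absurd h hq
    have hB0 : B (χ₀ • v - A ul v) = B 0 := by
      rw [map_zero]
      refine funext (Fin.forall_fin_two.mpr ⟨hx0, hx1⟩)
    have hz := (hinv ul).1 hB0
    apply heig
    rw [sub_eq_zero] at hz
    exact hz.symm
  have hinj : Function.Injective ⇑L := by
    intro x y h
    have := hker (x - y) (by rw [map_sub, h, sub_self])
    exact sub_eq_zero.mp this
  have hsurj : Function.Surjective ⇑L := by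
    have h := (LinearMap.injective_iff_surjective
      (f := (L : (Fin 2 → ℝ) →ₗ[ℝ] (Fin 2 → ℝ)))).mp
    exact h hinj
  refine ⟨?_, ?_⟩
  · rw [hfder]; exact ⟨hinj, hsurj⟩
  · intro v
    rw [hfder, hval v]
end

section
/- (Subsonic two-sided boundary control via block Kreiss symmetrizer.) Let Aˡ, Aʳ be 2×2 real matrices each with one positive eigenvalue λ₊^{l,r} and one negative eigenvalue -λ₋^{l,r}, with eigenprojectors π₊^{l,r}, π₋^{l,r}. Let 𝐀 = diag(-Aˡ, Aʳ) (4×4), and for M > 0 set 𝐒 = (π₋ˡ)ᵀπ₋ˡ ⊕ 0 + 0 ⊕ (π₊ʳ)ᵀπ₊ʳ + M[(π₊ˡ)ᵀπ₊ˡ ⊕ 0 + 0 ⊕ (π₋ʳ)ᵀπ₋ʳ] (block diagonal). Let 𝐍 be a 2×4 real matrix such that the 2×2 Lopatinskiĭ matrix 𝐋 = 𝐍·[eˡ₋ ⊕ 0, 0 ⊕ eʳ₊] is invertible, where e₋ˡ, e₊ʳ are the corresponding unit eigenvectors. Then 𝐒𝐀 is symmetric, and there exists M₀ such that for all M ≥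 M₀ there are α₁, β₁ > 0 with vᵀ𝐒𝐀v ≤ -α₁|v|² + β₁|𝐍v|² for all v ∈ ℝ⁴. -/
/-!
The spectral projectors satisfy `π₊ A = λ₊ π₊` and `π₋ A = -λ₋ π₋`, so `𝐒𝐀` is block diagonal
with symmetric blocks `λ₋ˡ π₋ˡᵀπ₋ˡ - M λ₊ˡ π₊ˡᵀπ₊ˡ` and `λ₊ʳ π₊ʳᵀπ₊ʳ - M λ₋ʳ π₋ʳᵀπ₋ʳ`.
Hence `vᵀ𝐒𝐀v` is at most `max(λ₋ˡ, λ₊ʳ)` times the incoming part `|π₋ˡvˡ|² + |π₊ʳvʳ|² ≤ c|v|²`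
minus `M min(λ₊ˡ, λ₋ʳ)` times the outgoing part `|π₊ˡvˡ|² + |π₋ʳvʳ|²`. Invertibility of the
Lopatinskiĭ matrix makes `v ↦ (π₊ˡvˡ, π₋ʳvʳ, 𝐍v)` injective, so in finite dimension
`|v|² ≤ C (|π₊ˡvˡ|² + |π₋ʳvʳ|² + |𝐍v|²)`, and for `M` large the outgoing part absorbs the
incoming one with `-|v|²` to spare.
-/

open Matrix WithLp

namespace Matrix
variable {ι κ : Type*} [Fintype ι] [Fintype κ]

lemma norm_toLp_sq_eq_dotProduct (x : ι → ℝ) :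
    ‖(toLp 2 x : EuclideanSpace ℝ ι)‖ ^ 2 = x ⬝ᵥ x := by
  rw [← real_inner_self_eq_norm_sq, EuclideanSpace.inner_toLp_toLp, star_trivial]

lemma dotProduct_self_nonneg (x : ι → ℝ) : 0 ≤ x ⬝ᵥ x :=
  norm_toLp_sq_eq_dotProduct x ▸ sq_nonneg _

lemma exists_mulVec_dotProduct_self_le [DecidableEq ι] (P : Matrix κ ι ℝ) :
    ∃ c ≥ 0, ∀ v, P *ᵥ v ⬝ᵥ P *ᵥ v ≤ c * (v ⬝ᵥ v) := by
  let f := LinearMap.toContinuousLinearMap (toLpLin 2 2 P)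
  refine ⟨‖f‖ ^ 2, by positivity, fun v => ?_⟩
  rw [← norm_toLp_sq_eq_dotProduct, ← norm_toLp_sq_eq_dotProduct, ← mul_pow]
  exact pow_le_pow_left₀ (norm_nonneg _) (f.le_opNorm (toLp 2 v)) 2

lemma exists_dotProduct_self_le_of_mulVec_eq_zero [DecidableEq ι] (G : Matrix κ ι ℝ)
    (hG : ∀ v, G *ᵥ v = 0 → v = 0) :
    ∃ C > 0, ∀ v, v ⬝ᵥ v ≤ C * (G *ᵥ v ⬝ᵥ G *ᵥ v) := by
  have hker : LinearMap.ker (toLpLin 2 2 G) = ⊥ := by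
    rw [LinearMap.ker_eq_bot']
    intro v hv
    simpa using congrArg (toLp 2) (hG (ofLp v) (congrArg ofLp hv))
  obtain ⟨K, hK, hf⟩ := (toLpLin 2 2 G).exists_antilipschitzWith hker
  refine ⟨(K : ℝ) ^ 2, by positivity, fun v => ?_⟩
  rw [← norm_toLp_sq_eq_dotProduct, ← norm_toLp_sq_eq_dotProduct, ← mul_pow]
  exact pow_le_pow_left₀ (norm_nonneg _) (ZeroHomClass.bound_of_antilipschitz _ hf (toLp 2 v)) 2

end Matrix

section SpectralProjectors
variable {K : Type*} [Field K]

lemma spectralProjectors_mulVec {n : Type*} [Fintype n] [DecidableEq n]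
    {A πp πm : Matrix n n K} {lp lm : K} {ep em : n → K} (hs : lp + lm ≠ 0)
    (hp : A *ᵥ ep = lp • ep) (hm : A *ᵥ em = (-lm) • em)
    (hπp : πp = (lp + lm)⁻¹ • (A + lm • (1 : Matrix n n K)))
    (hπm : πm = (lp + lm)⁻¹ • (lp • (1 : Matrix n n K) - A)) (a b : K) :
    πp *ᵥ (a • ep + b • em) = a • ep ∧ πm *ᵥ (a • ep + b • em) = b • em := by
  subst hπp hπm
  simp only [smul_mulVec, add_mulVec, sub_mulVec, one_mulVec, mulVec_add, mulVec_smul, hp, hm]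
  constructor
  · ext i; simp only [Pi.smul_apply, Pi.add_apply, smul_eq_mul]; field_simp; ring
  · ext i; simp only [Pi.smul_apply, Pi.add_apply, Pi.sub_apply, smul_eq_mul]; field_simp; ring

lemma exists_eq_smul_add_smul_of_eigen {A : Matrix (Fin 2) (Fin 2) K} {μ ν : K}
    {u w : Fin 2 → K} (hμν : μ ≠ ν) (hu : u ≠ 0) (hw : w ≠ 0)
    (hAu : A *ᵥ u = μ • u) (hAw : A *ᵥ w = ν • w) (x : Fin 2 → K) :
    ∃ a b : K, x = a • u + b • w := by
  have hind : LinearIndependent K ![u, w] := by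
    rw [linearIndependent_fin2]
    refine ⟨hw, fun a ha => ?_⟩
    simp only [Matrix.cons_val_one, Matrix.cons_val_zero] at ha
    have : (μ - ν) • u = 0 := by
      rw [sub_smul, ← hAu, ← ha, mulVec_smul, hAw, smul_comm, sub_self]
    exact hu ((smul_eq_zero.mp this).resolve_left (sub_ne_zero.mpr hμν))
  have hspan := hind.span_eq_top_of_card_eq_finrank (by simp)
  obtain ⟨c, hc⟩ :=
    (Submodule.mem_span_range_iff_exists_fun K).mp (hspan ▸ Submodule.mem_top (x := x))
  exact ⟨c 0, c 1, by simpa [Fin.sum_univ_two] using hc.symm⟩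

lemma spectralProjectors_mul_and_ker {A πp πm : Matrix (Fin 2) (Fin 2) K} {lp lm : K}
    {ep em : Fin 2 → K} (hs : lp + lm ≠ 0) (hep : ep ≠ 0) (hem : em ≠ 0)
    (hp : A *ᵥ ep = lp • ep) (hm : A *ᵥ em = (-lm) • em)
    (hπp : πp = (lp + lm)⁻¹ • (A + lm • (1 : Matrix (Fin 2) (Fin 2) K)))
    (hπm : πm = (lp + lm)⁻¹ • (lp • (1 : Matrix (Fin 2) (Fin 2) K) - A)) :
    πp * A = lp • πp ∧ πm * A = (-lm) • πm ∧
      (∀ w, πp *ᵥ w = 0 → ∃ b : K, w = b • em) ∧ (∀ w, πm *ᵥ w = 0 → ∃ a : K, w = a • ep) := by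
  have hdec := exists_eq_smul_add_smul_of_eigen (fun h => hs (by rw [h, neg_add_cancel]))
    hep hem hp hm
  have hπ := spectralProjectors_mulVec hs hp hm hπp hπm
  have hA (a b : K) : A *ᵥ (a • ep + b • em) = (lp * a) • ep + (-lm * b) • em := by
    rw [mulVec_add, mulVec_smul, mulVec_smul, hp, hm, smul_smul, smul_smul, mul_comm a, mul_comm b]
  refine ⟨ext_iff_mulVec.mpr fun w => ?_, ext_iff_mulVec.mpr fun w => ?_, fun w hw => ?_,
    fun w hw => ?_⟩ <;> obtain ⟨a, b, rfl⟩ := hdec w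
  · rw [← mulVec_mulVec, hA, (hπ _ _).1, smul_mulVec, (hπ _ _).1, smul_smul]
  · rw [← mulVec_mulVec, hA, (hπ _ _).2, smul_mulVec, (hπ _ _).2, smul_smul]
  · exact ⟨b, by rw [← (hπ a b).1, hw, zero_add]⟩
  · exact ⟨a, by rw [← (hπ a b).2, hw, add_zero]⟩

end SpectralProjectors

section Symmetrizer
variable {R n : Type*} [CommRing R] [Fintype n]

lemma transpose_mul_self_add_smul_mul {A P Q : Matrix n n R} {a b : R}
    (hP : P * A = a • P) (hQ : Q * A = b • Q) (M : R) :
    (Pᵀ * P + M • (Qᵀ * Q)) * A = a • (Pᵀ * P) + (M * b) • (Qᵀ * Q) := by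
  rw [add_mul, smul_mul_assoc, Matrix.mul_assoc, Matrix.mul_assoc, hP, hQ, Matrix.mul_smul,
    Matrix.mul_smul, smul_smul]

lemma isSymm_smul_transpose_mul_self_add (P Q : Matrix n n R) (a b : R) :
    (a • (Pᵀ * P) + b • (Qᵀ * Q)).IsSymm :=
  ((isSymm_transpose_mul_self P).smul a).add ((isSymm_transpose_mul_self Q).smul b)

lemma dotProduct_smul_transpose_mul_self_add_mulVec (P Q : Matrix n n R) (a b : R)
    (w : n → R) :
    w ⬝ᵥ ((a • (Pᵀ * P) + b • (Qᵀ * Q)) *ᵥ w) =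
      a * (P *ᵥ w ⬝ᵥ P *ᵥ w) + b * (Q *ᵥ w ⬝ᵥ Q *ᵥ w) := by
  simp only [add_mulVec, smul_mulVec, ← mulVec_mulVec, dotProduct_add, dotProduct_smul,
    dotProduct_mulVec, vecMul_transpose, smul_eq_mul]

end Symmetrizer

lemma eq_zero_of_smul_add_smul_eq_zero {K : Type*} [Field K] {x y : Fin 2 → K}
    (hxy : IsUnit (!![x 0, y 0; x 1, y 1] : Matrix (Fin 2) (Fin 2) K).det) {a b : K}
    (h : a • x + b • y = 0) : a = 0 ∧ b = 0 := by
  have hab : !![x 0, y 0; x 1, y 1] *ᵥ ![a, b] = 0 := by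
    ext i; fin_cases i
    · simpa [mul_comm] using congrFun h 0
    · simpa [mul_comm] using congrFun h 1
  have := eq_zero_of_mulVec_eq_zero hxy.ne_zero hab
  exact ⟨by simpa using congrFun this 0, by simpa using congrFun this 1⟩

lemma eq_zero_of_fromRows_mulVec_eq_zero {K m n : Type*} [Field K] [Fintype m] [Fintype n]
    {P : Matrix m m K} {Q : Matrix n n K} {N : Matrix (Fin 2) (m ⊕ n) K} {u : m → K}
    {w : n → K} (hP : ∀ x, P *ᵥ x = 0 → ∃ a : K, x = a • u)
    (hQ : ∀ y, Q *ᵥ y = 0 → ∃ b : K, y = b • w)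
    (hL : IsUnit (!![(N *ᵥ Sum.elim u fun _ => (0:K)) 0, (N *ᵥ Sum.elim (fun _ => (0:K)) w) 0;
        (N *ᵥ Sum.elim u fun _ => (0:K)) 1, (N *ᵥ Sum.elim (fun _ => (0:K)) w) 1] :
        Matrix (Fin 2) (Fin 2) K).det) (v : m ⊕ n → K)
    (hv : fromRows (fromBlocks P 0 0 Q) N *ᵥ v = 0) : v = 0 := by
  obtain ⟨x, y, rfl⟩ : ∃ x y, v = Sum.elim x y := ⟨_, _, (Sum.elim_comp_inl_inr v).symm⟩
  simp only [fromRows_mulVec, fromBlocks_mulVec, Sum.elim_comp_inl, Sum.elim_comp_inr,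
    zero_mulVec, add_zero, zero_add, ← Sum.elim_zero_zero, Sum.elim_eq_iff] at hv ⊢
  obtain ⟨⟨hPx, hQy⟩, hN⟩ := hv
  obtain ⟨a, rfl⟩ := hP x hPx
  obtain ⟨b, rfl⟩ := hQ y hQy
  have hsplit : Sum.elim (a • u) (b • w) =
      a • Sum.elim u (fun _ => (0:K)) + b • Sum.elim (fun _ => (0:K)) w := by
    ext (i | i) <;> simp
  rw [hsplit, mulVec_add, mulVec_smul, mulVec_smul] at hN
  obtain ⟨rfl, rfl⟩ := eq_zero_of_smul_add_smul_eq_zero hL hN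
  simp

lemma le_neg_add_mul_of_coercive {q a x o n C μ : ℝ} (ha : 0 ≤ a + 1) (ho : 0 ≤ o)
    (hcoer : x ≤ C * (o + n)) (hμ : C * (a + 1) ≤ μ) (hq : q ≤ a * x - μ * o) :
    q ≤ -1 * x + C * (a + 1) * n := by
  nlinarith [mul_le_mul_of_nonneg_right hμ ho, mul_le_mul_of_nonneg_left hcoer ha]

lemma exists_symmetrizer_dissipative {m n k : Type*} [Fintype m] [Fintype n] [Fintype k]
    [DecidableEq m] [DecidableEq n] {πpl πml : Matrix m m ℝ} {πpr πmr : Matrix n n ℝ}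
    {lpl lml lpr lmr : ℝ} (hlpl : 0 < lpl) (hlml : 0 < lml) (hlmr : 0 < lmr)
    {N : Matrix k (m ⊕ n) ℝ} (hG : ∀ v, fromRows (fromBlocks πpl 0 0 πmr) N *ᵥ v = 0 → v = 0) :
    ∃ M₀ : ℝ, ∀ M : ℝ, M₀ ≤ M → ∃ α₁ > (0:ℝ), ∃ β₁ > (0:ℝ), ∀ v : m ⊕ n → ℝ,
      v ⬝ᵥ (fromBlocks (lml • (πmlᵀ * πml) + (M * -lpl) • (πplᵀ * πpl)) 0 0
          (lpr • (πprᵀ * πpr) + (M * -lmr) • (πmrᵀ * πmr)) *ᵥ v) ≤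
        -α₁ * (v ⬝ᵥ v) + β₁ * (N *ᵥ v ⬝ᵥ N *ᵥ v) := by
  obtain ⟨c, hc0, hc⟩ := exists_mulVec_dotProduct_self_le (fromBlocks πml 0 0 πpr)
  obtain ⟨C, hC0, hC⟩ := exists_dotProduct_self_le_of_mulVec_eq_zero
    (fromRows (fromBlocks πpl 0 0 πmr) N) hG
  set lin := max lml lpr
  set lout := min lpl lmr
  have hlin : 0 ≤ lin := hlml.le.trans (le_max_left _ _)
  have hlout : 0 < lout := lt_min hlpl hlmr
  refine ⟨C * (lin * c + 1) / lout, fun M hM => ⟨1, one_pos, C * (lin * c + 1), by positivity,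
    fun v => ?_⟩⟩
  obtain ⟨vl, vr, rfl⟩ : ∃ vl vr, v = Sum.elim vl vr := ⟨_, _, (Sum.elim_comp_inl_inr v).symm⟩
  have hinc := hc (Sum.elim vl vr)
  have hcoer := hC (Sum.elim vl vr)
  simp only [fromBlocks_mulVec, fromRows_mulVec, Sum.elim_comp_inl, Sum.elim_comp_inr,
    zero_mulVec, add_zero, zero_add, sumElim_dotProduct_sumElim,
    dotProduct_smul_transpose_mul_self_add_mulVec] at hinc hcoer ⊢
  have hM0 : 0 ≤ M := (by positivity : 0 ≤ C * (lin * c + 1) / lout).trans hM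
  refine le_neg_add_mul_of_coercive (by positivity)
    (add_nonneg (dotProduct_self_nonneg _) (dotProduct_self_nonneg _)) hcoer
    ((div_le_iff₀ hlout).mp hM) ?_
  linarith [mul_nonneg (sub_nonneg.2 (le_max_left lml lpr)) (dotProduct_self_nonneg (πml *ᵥ vl)),
    mul_nonneg (sub_nonneg.2 (le_max_right lml lpr)) (dotProduct_self_nonneg (πpr *ᵥ vr)),
    mul_nonneg (mul_nonneg hM0 (sub_nonneg.2 (min_le_left lpl lmr)))
      (dotProduct_self_nonneg (πpl *ᵥ vl)),
    mul_nonneg (mul_nonneg hM0 (sub_nonneg.2 (min_le_right lpl lmr)))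
      (dotProduct_self_nonneg (πmr *ᵥ vr)),
    mul_le_mul_of_nonneg_left hinc hlin]

/-- **Subsonic two-sided boundary control via a block Kreiss symmetrizer.** For 2×2 matrices
`Aˡ, Aʳ`, each with a positive eigenvalue `λ₊` and a negative eigenvalue `-λ₋`, with spectral
projectors `π±`, the block matrix `𝐒𝐀` (with `𝐀 = diag(-Aˡ, Aʳ)` and
`𝐒 = diag(π₋ˡᵀπ₋ˡ + Mπ₊ˡᵀπ₊ˡ, π₊ʳᵀπ₊ʳ + Mπ₋ʳᵀπ₋ʳ)`) is symmetric; and if the 2×2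
Lopatinskiĭ matrix `𝐋 = 𝐍·[e₋ˡ ⊕ 0, 0 ⊕ e₊ʳ]` is invertible, then there is `M₀` such that
for all `M ≥ M₀` there exist `α₁, β₁ > 0` with `vᵀ𝐒𝐀v ≤ -α₁|v|² + β₁|𝐍v|²` for all
`v ∈ ℝ⁴`. -/
theorem stmt18 (Al Ar πpl πml πpr πmr : Matrix (Fin 2) (Fin 2) ℝ)
    (lpl lml lpr lmr : ℝ)
    (hlpl : 0 < lpl) (hlml : 0 < lml) (hlpr : 0 < lpr) (hlmr : 0 < lmr)
    (epl eml epr emr : Fin 2 → ℝ)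
    (hepl : epl ⬝ᵥ epl = 1) (heml : eml ⬝ᵥ eml = 1)
    (hepr : epr ⬝ᵥ epr = 1) (hemr : emr ⬝ᵥ emr = 1)
    (heigpl : Al *ᵥ epl = lpl • epl) (heigml : Al *ᵥ eml = (-lml) • eml)
    (heigpr : Ar *ᵥ epr = lpr • epr) (heigmr : Ar *ᵥ emr = (-lmr) • emr)
    (hπpl : πpl = (lpl + lml)⁻¹ • (Al + lml • (1 : Matrix (Fin 2) (Fin 2) ℝ)))
    (hπml : πml = (lpl + lml)⁻¹ • (lpl • (1 : Matrix (Fin 2) (Fin 2) ℝ) - Al))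
    (hπpr : πpr = (lpr + lmr)⁻¹ • (Ar + lmr • (1 : Matrix (Fin 2) (Fin 2) ℝ)))
    (hπmr : πmr = (lpr + lmr)⁻¹ • (lpr • (1 : Matrix (Fin 2) (Fin 2) ℝ) - Ar))
    (N : Matrix (Fin 2) (Fin 2 ⊕ Fin 2) ℝ)
    (hL : IsUnit (!![(N *ᵥ Sum.elim eml fun _ => (0:ℝ)) 0,
        (N *ᵥ Sum.elim (fun _ => (0:ℝ)) epr) 0;
        (N *ᵥ Sum.elim eml fun _ => (0:ℝ)) 1,
        (N *ᵥ Sum.elim (fun _ => (0:ℝ)) epr) 1] : Matrix (Fin 2) (Fin 2) ℝ).det) :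
    (∀ M : ℝ,
      (Matrix.fromBlocks (πmlᵀ * πml + M • (πplᵀ * πpl)) 0 0
          (πprᵀ * πpr + M • (πmrᵀ * πmr)) *
        Matrix.fromBlocks (-Al) 0 0 Ar).IsSymm) ∧
    ∃ M₀ : ℝ, ∀ M : ℝ, M₀ ≤ M → ∃ α₁ > (0:ℝ), ∃ β₁ > (0:ℝ),
      ∀ v : Fin 2 ⊕ Fin 2 → ℝ,
        v ⬝ᵥ ((Matrix.fromBlocks (πmlᵀ * πml + M • (πplᵀ * πpl)) 0 0
              (πprᵀ * πpr + M • (πmrᵀ * πmr)) *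
            Matrix.fromBlocks (-Al) 0 0 Ar) *ᵥ v) ≤
          -α₁ * (v ⬝ᵥ v) + β₁ * ((N *ᵥ v) ⬝ᵥ (N *ᵥ v)) := by
  have hne : ∀ e : Fin 2 → ℝ, e ⬝ᵥ e = 1 → e ≠ 0 := by rintro e he rfl; simp at he
  obtain ⟨hplA, hmlA, hkerl, -⟩ := spectralProjectors_mul_and_ker (by positivity)
    (hne _ hepl) (hne _ heml) heigpl heigml hπpl hπml
  obtain ⟨hprA, hmrA, -, hkerr⟩ := spectralProjectors_mul_and_ker (by positivity)
    (hne _ hepr) (hne _ hemr) heigpr heigmr hπpr hπmr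
  have hSA (M : ℝ) : fromBlocks (πmlᵀ * πml + M • (πplᵀ * πpl)) 0 0
      (πprᵀ * πpr + M • (πmrᵀ * πmr)) * fromBlocks (-Al) 0 0 Ar =
      fromBlocks (lml • (πmlᵀ * πml) + (M * -lpl) • (πplᵀ * πpl)) 0 0
        (lpr • (πprᵀ * πpr) + (M * -lmr) • (πmrᵀ * πmr)) := by
    rw [fromBlocks_multiply, transpose_mul_self_add_smul_mul (A := -Al) (a := lml) (b := -lpl)
      (by rw [mul_neg, hmlA, neg_smul, neg_neg]) (by rw [mul_neg, hplA, neg_smul]),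
      transpose_mul_self_add_smul_mul hprA hmrA]
    simp
  refine ⟨fun M => hSA M ▸ .fromBlocks (isSymm_smul_transpose_mul_self_add _ _ _ _) rfl
    (isSymm_smul_transpose_mul_self_add _ _ _ _), ?_⟩
  simpa only [hSA] using exists_symmetrizer_dissipative hlpl hlml hlmr
    (eq_zero_of_fromRows_mulVec_eq_zero hkerl hkerr hL)
end
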